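/- Let A = (Q, Σ, init, Δ, fin) be a trim WFA_if. Define the WFA B = (Q∪{s₀,s_f}, Σ∪{𝗌,𝖿}, s₀, Δ′), where s₀,s_f are fresh states and 𝗌,𝖿 are fresh letters, whose finite-weight transitions are exactly: (p,σ,c,q) for every (p,σ,c,q) ∈ Δ with c < ∞; (s₀,𝗌,init(q),q) for every q with init(q) < ∞; and (q,𝖿,fin(q),s_f) for every q with fin(q) < ∞; all other transitions have weight ∞. Then A is determinizable (as a WFA_if) if and only if B is determinizable (as a WFA). -/

import Mathlib

open scoped Classical

/-- `ℤ∞ = ℤ ∪ {∞}`. -/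
abbrev ZInf : Type := WithTop ℤ

/-- `mwt Δ w p q` is the minimal weight of a run of the WFA with transition weights `Δ`
on the word `w` from state `p` to state `q` (`⊤` if there is no such run). -/
noncomputable def mwt {Q A : Type*} [Fintype Q] (Δ : Q → A → Q → ZInf) :
    List A → Q → Q → ZInf
  | [], p, q => if p = q then 0 else ⊤
  | σ :: w, p, q => Finset.univ.inf fun t => Δ p σ t + mwt Δ w t q

/-- `wtW Δ q₀ w = mwt(w, q₀ → Q)`: the value that the WFA `(Δ, q₀)` assigns to the
word `w`. -/
noncomputable def wtW {Q A : Type*} [Fintype Q] (Δ : Q → A → Q → ZInf) (q₀ : Q)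
    (w : List A) : ZInf :=
  Finset.univ.inf fun q => mwt Δ w q₀ q

/-- A WFA is deterministic if from every state, on every letter, at most one transition has
finite weight. -/
def IsDet {Q A : Type*} (Δ : Q → A → Q → ZInf) : Prop :=
  ∀ p σ q q', Δ p σ q ≠ ⊤ → Δ p σ q' ≠ ⊤ → q = q'

/-- A WFA is determinizable if there is a deterministic WFA over the same alphabet that
computes the same function on words. -/
def Determinizable {Q A : Type*} [Fintype Q] (Δ : Q → A → Q → ZInf) (q₀ : Q) : Prop :=
  ∃ (Q' : Type) (inst : Fintype Q') (Δ' : Q' → A → Q' → ZInf) (q₀' : Q'),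
    IsDet Δ' ∧ ∀ w : List A, @wtW Q' A inst Δ' q₀' w = wtW Δ q₀ w

/-- The value `wt_A(w) = mwt⁺ⁱᶠ(w, Q₀ → F)` of a word in a WFA with initial weights `iw`
and final weights `fw`. -/
noncomputable def wtIF {Q A : Type*} [Fintype Q] (iw : Q → ZInf) (Δ : Q → A → Q → ZInf)
    (fw : Q → ZInf) (w : List A) : ZInf :=
  Finset.univ.inf fun p => Finset.univ.inf fun q => iw p + mwt Δ w p q + fw q

/-- `mwtI iw Δ x q = mwt⁺ⁱ(x, Q₀ → q)`: the minimum of `init(p) + wt(ρ)` over runs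
`ρ : p → q` on `x`. -/
noncomputable def mwtI {Q A : Type*} [Fintype Q] (iw : Q → ZInf) (Δ : Q → A → Q → ZInf)
    (x : List A) (q : Q) : ZInf :=
  Finset.univ.inf fun p => iw p + mwt Δ x p q

/-- `mwtIall iw Δ x = mwt⁺ⁱ(x, Q₀ → Q)`. -/
noncomputable def mwtIall {Q A : Type*} [Fintype Q] (iw : Q → ZInf) (Δ : Q → A → Q → ZInf)
    (x : List A) : ZInf :=
  Finset.univ.inf fun q => mwtI iw Δ x q

/-- `mwtF Δ fw y q = mwt⁺ᶠ(y, q → F)`: the minimum of `wt(ρ) + fin(r)` over runs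
`ρ : q → r` on `y`. -/
noncomputable def mwtF {Q A : Type*} [Fintype Q] (Δ : Q → A → Q → ZInf) (fw : Q → ZInf)
    (y : List A) (q : Q) : ZInf :=
  Finset.univ.inf fun r => mwt Δ y q r + fw r

/-- A WFA with initial and final weights is trim if every state is reachable from `Q₀` by
some run and has some run into `F`. -/
def TrimIF {Q A : Type*} [Fintype Q] (iw : Q → ZInf) (Δ : Q → A → Q → ZInf)
    (fw : Q → ZInf) : Prop :=
  ∀ q : Q, (∃ (p : Q) (w : List A), iw p ≠ ⊤ ∧ mwt Δ w p q ≠ ⊤) ∧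
    (∃ (r : Q) (w : List A), fw r ≠ ⊤ ∧ mwt Δ w q r ≠ ⊤)

/-- A WFA with initial and final weights is deterministic if exactly one state has finite
initial weight and from every state and letter at most one transition has finite weight. -/
def IsDetIF {Q A : Type*} (iw : Q → ZInf) (Δ : Q → A → Q → ZInf) : Prop :=
  (∃! q, iw q ≠ ⊤) ∧ IsDet Δ

/-- A WFA with initial and final weights is determinizable if a deterministic one computes
the same function on words. -/
def DeterminizableIF {Q A : Type*} [Fintype Q] (iw : Q → ZInf) (Δ : Q → A → Q → ZInf)
    (fw : Q → ZInf) : Prop :=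
  ∃ (Q' : Type) (inst : Fintype Q') (iw' : Q' → ZInf) (Δ' : Q' → A → Q' → ZInf)
    (fw' : Q' → ZInf),
    IsDetIF iw' Δ' ∧ ∀ w : List A, @wtIF Q' A inst iw' Δ' fw' w = wtIF iw Δ fw w

/-- Two fresh objects: used both for the fresh states `s₀, s_f` and for the fresh letters
`𝗌, 𝖿`. -/
inductive SF where
  | start
  | finish
deriving DecidableEq

instance : Fintype SF := ⟨{SF.start, SF.finish}, fun x => by cases x <;> simp⟩

/-- The transition weights of the WFA `B` obtained from the WFA_if `A = (iw, Δ, fw)`: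
the transitions of `A` keep their weights, `(s₀, 𝗌, init(q), q)` for every `q` with finite
initial weight, `(q, 𝖿, fin(q), s_f)` for every `q` with finite final weight, and all other
transitions have weight `∞`. -/
def liftDelta {Q A : Type*} (iw : Q → ZInf) (Δ : Q → A → Q → ZInf) (fw : Q → ZInf) :
    (Q ⊕ SF) → (A ⊕ SF) → (Q ⊕ SF) → ZInf
  | .inl p, .inl σ, .inl q => Δ p σ q
  | .inr .start, .inr .start, .inl q => iw q
  | .inl q, .inr .finish, .inr .finish => fw q
  | _, _, _ => ⊤

namespace WFAE

open Finset

variable {Q A : Type*} [Fintype Q]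

lemma zadd_inf {ι : Type*} [Fintype ι] (a : ZInf) (f : ι → ZInf) :
    a + Finset.univ.inf f = Finset.univ.inf fun i => a + f i := by
  rcases (Finset.univ (α := ι)).eq_empty_or_nonempty with h | h
  · rw [h]; simp
  · apply le_antisymm
    · exact Finset.le_inf fun i _ => add_le_add_right (Finset.inf_le (Finset.mem_univ i)) a
    · obtain ⟨i, _, hEq⟩ := Finset.exists_mem_eq_inf _ h f
      rw [hEq]
      exact Finset.inf_le (Finset.mem_univ i)

lemma zinf_add {ι : Type*} [Fintype ι] (a : ZInf) (f : ι → ZInf) :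
    Finset.univ.inf f + a = Finset.univ.inf fun i => f i + a := by
  rcases (Finset.univ (α := ι)).eq_empty_or_nonempty with h | h
  · rw [h]; simp
  · apply le_antisymm
    · exact Finset.le_inf fun i _ => add_le_add_left (Finset.inf_le (Finset.mem_univ i)) a
    · obtain ⟨i, _, hEq⟩ := Finset.exists_mem_eq_inf _ h f
      rw [hEq]
      exact Finset.inf_le (Finset.mem_univ i)

lemma inf_swap {ι κ : Type*} [Fintype ι] [Fintype κ] (f : ι → κ → ZInf) :
    (Finset.univ.inf fun i => Finset.univ.inf fun k => f i k) =
      Finset.univ.inf fun k => Finset.univ.inf fun i => f i k := by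
  apply le_antisymm <;>
    exact Finset.le_inf fun k _ => Finset.le_inf fun i _ =>
      (Finset.inf_le (Finset.mem_univ _)).trans (Finset.inf_le (Finset.mem_univ _))

lemma inf_eq_single {ι : Type*} [Fintype ι] (f : ι → ZInf) (i0 : ι)
    (h : ∀ i, i ≠ i0 → f i = ⊤) : Finset.univ.inf f = f i0 := by
  apply le_antisymm (Finset.inf_le (Finset.mem_univ i0))
  refine Finset.le_inf fun i _ => ?_
  by_cases hi : i = i0
  · subst hi; exact le_rfl
  · rw [h i hi]; exact le_top

lemma inf_top' {ι : Type*} [Fintype ι] : (Finset.univ.inf fun _ : ι => (⊤ : ZInf)) = ⊤ := by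
  simp

lemma inf_ne_top {ι : Type*} [Fintype ι] {f : ι → ZInf}
    (h : Finset.univ.inf f ≠ ⊤) : ∃ i, f i ≠ ⊤ := by
  by_contra hc
  push_neg at hc
  exact h ((Finset.inf_eq_top_iff _ _).2 fun i _ => hc i)

lemma inf_attained {ι : Type*} [Fintype ι] [Nonempty ι] (f : ι → ZInf) :
    ∃ i, Finset.univ.inf f = f i := by
  obtain ⟨i, _, h⟩ := Finset.exists_mem_eq_inf Finset.univ Finset.univ_nonempty f
  exact ⟨i, h⟩

lemma zinf_int {a : ZInf} (h : a ≠ ⊤) : ∃ m : ℤ, a = (m : ℤ) :=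
  ⟨a.untop h, (WithTop.coe_untop a h).symm⟩

lemma inf_equiv {α β : Type*} [Fintype α] [Fintype β] (e : α ≃ β) (f : β → ZInf) :
    Finset.univ.inf f = Finset.univ.inf (fun a => f (e a)) := by
  apply le_antisymm
  · exact Finset.le_inf fun a _ => Finset.inf_le (Finset.mem_univ _)
  · exact Finset.le_inf fun b _ => by
      have := Finset.inf_le (f := fun a => f (e a)) (Finset.mem_univ (e.symm b))
      simpa using this

lemma inf_sum {α β : Type*} [Fintype α] [Fintype β] (f : α ⊕ β → ZInf) :
    Finset.univ.inf f =
      (Finset.univ.inf fun a => f (.inl a)) ⊓ (Finset.univ.inf fun b => f (.inr b)) := by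
  apply le_antisymm
  · exact le_inf (Finset.le_inf fun a _ => Finset.inf_le (Finset.mem_univ _))
      (Finset.le_inf fun b _ => Finset.inf_le (Finset.mem_univ _))
  · apply Finset.le_inf
    rintro (a | b) _
    · exact inf_le_left.trans (Finset.inf_le (Finset.mem_univ _))
    · exact inf_le_right.trans (Finset.inf_le (Finset.mem_univ _))

lemma mwt_nil (Δ : Q → A → Q → ZInf) (p q : Q) :
    mwt Δ [] p q = if p = q then 0 else ⊤ := rfl

lemma mwt_cons (Δ : Q → A → Q → ZInf) (σ : A) (w : List A) (p q : Q) :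
    mwt Δ (σ :: w) p q = Finset.univ.inf fun t => Δ p σ t + mwt Δ w t q := rfl

lemma mwt_append (Δ : Q → A → Q → ZInf) (u v : List A) (p r : Q) :
    mwt Δ (u ++ v) p r = Finset.univ.inf fun t => mwt Δ u p t + mwt Δ v t r := by
  induction u generalizing p with
  | nil =>
    simp only [List.nil_append]
    apply le_antisymm
    · refine Finset.le_inf fun t _ => ?_
      by_cases h : p = t
      · subst h; simp [mwt_nil]
      · rw [mwt_nil, if_neg h]; simp
    · refine (Finset.inf_le (Finset.mem_univ p)).trans ?_
      simp [mwt_nil]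
  | cons a u ih =>
    rw [List.cons_append]
    simp only [mwt_cons]
    have : ∀ s : Q, Δ p a s + mwt Δ (u ++ v) s r
        = Finset.univ.inf fun t => (Δ p a s + mwt Δ u s t) + mwt Δ v t r := by
      intro s
      rw [ih, zadd_inf]
      exact Finset.inf_congr rfl fun t _ => (add_assoc _ _ _).symm
    simp only [this]
    rw [inf_swap]
    exact Finset.inf_congr rfl fun t _ => (zinf_add _ _).symm

lemma mwt_single (Δ : Q → A → Q → ZInf) (σ : A) (p q : Q) :
    mwt Δ [σ] p q = Δ p σ q := by
  rw [mwt_cons]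
  rw [inf_eq_single _ q]
  · simp [mwt_nil]
  · intro t ht
    rw [mwt_nil, if_neg ht]
    simp

lemma mwt_snoc (Δ : Q → A → Q → ZInf) (u : List A) (σ : A) (p r : Q) :
    mwt Δ (u ++ [σ]) p r = Finset.univ.inf fun t => mwt Δ u p t + Δ t σ r := by
  rw [mwt_append]
  exact Finset.inf_congr rfl fun t _ => by rw [mwt_single]

lemma mwt_triangle (Δ : Q → A → Q → ZInf) (u v : List A) (p t r : Q) :
    mwt Δ (u ++ v) p r ≤ mwt Δ u p t + mwt Δ v t r := by
  rw [mwt_append]; exact Finset.inf_le (Finset.mem_univ t)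

lemma mwt_split [Nonempty Q] (Δ : Q → A → Q → ZInf) (u v : List A) (p r : Q) :
    ∃ t, mwt Δ (u ++ v) p r = mwt Δ u p t + mwt Δ v t r := by
  rw [mwt_append]; exact inf_attained _

end WFAE
namespace WFAE
open Finset
variable {Q A : Type*} [Fintype Q]

lemma wtW_nil (Δ : Q → A → Q → ZInf) (p : Q) : wtW Δ p [] = 0 := by
  unfold wtW
  apply le_antisymm
  · refine (Finset.inf_le (Finset.mem_univ p)).trans ?_
    simp [mwt_nil]
  · refine Finset.le_inf fun q _ => ?_
    rw [mwt_nil]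
    by_cases h : p = q <;> simp [h]

lemma wtW_cons (Δ : Q → A → Q → ZInf) (p : Q) (a : A) (w : List A) :
    wtW Δ p (a :: w) = Finset.univ.inf fun t => Δ p a t + wtW Δ t w := by
  unfold wtW
  simp only [mwt_cons]
  rw [inf_swap]
  exact Finset.inf_congr rfl fun t _ => (zadd_inf _ _).symm

lemma wtW_dead (Δ : Q → A → Q → ZInf) (p : Q) (h : ∀ a t, Δ p a t = ⊤) (w : List A) :
    wtW Δ p w = if w = [] then 0 else ⊤ := by
  cases w with
  | nil => simp [wtW_nil]
  | cons a w =>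
    rw [wtW_cons, if_neg (by simp)]
    rw [Finset.inf_eq_top_iff]
    intro t _
    rw [h a t]
    simp

lemma mwtI_nil (iw : Q → ZInf) (Δ : Q → A → Q → ZInf) (q : Q) :
    mwtI iw Δ [] q = iw q := by
  unfold mwtI
  rw [inf_eq_single _ q]
  · simp [mwt_nil]
  · intro p hp
    rw [mwt_nil, if_neg hp]
    simp

lemma mwtI_append (iw : Q → ZInf) (Δ : Q → A → Q → ZInf) (u v : List A) (q : Q) :
    mwtI iw Δ (u ++ v) q = Finset.univ.inf fun t => mwtI iw Δ u t + mwt Δ v t q := by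
  unfold mwtI
  have : ∀ p : Q, iw p + mwt Δ (u ++ v) p q
      = Finset.univ.inf fun t => (iw p + mwt Δ u p t) + mwt Δ v t q := by
    intro p
    rw [mwt_append, zadd_inf]
    exact Finset.inf_congr rfl fun t _ => (add_assoc _ _ _).symm
  simp only [this]
  rw [inf_swap]
  exact Finset.inf_congr rfl fun t _ => (zinf_add _ _).symm

lemma mwtI_snoc (iw : Q → ZInf) (Δ : Q → A → Q → ZInf) (u : List A) (σ : A) (q : Q) :
    mwtI iw Δ (u ++ [σ]) q = Finset.univ.inf fun t => mwtI iw Δ u t + Δ t σ q := by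
  rw [mwtI_append]
  exact Finset.inf_congr rfl fun t _ => by rw [mwt_single]

lemma mwtF_nil (Δ : Q → A → Q → ZInf) (fw : Q → ZInf) (q : Q) :
    mwtF Δ fw [] q = fw q := by
  unfold mwtF
  rw [inf_eq_single _ q]
  · simp [mwt_nil]
  · intro r hr
    rw [mwt_nil, if_neg (fun h => hr h.symm)]
    simp

lemma mwtF_cons (Δ : Q → A → Q → ZInf) (fw : Q → ZInf) (σ : A) (z : List A) (q : Q) :
    mwtF Δ fw (σ :: z) q = Finset.univ.inf fun t => Δ q σ t + mwtF Δ fw z t := by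
  unfold mwtF
  simp only [mwt_cons]
  have : ∀ r : Q, (Finset.univ.inf fun t => Δ q σ t + mwt Δ z t r) + fw r
      = Finset.univ.inf fun t => Δ q σ t + (mwt Δ z t r + fw r) := by
    intro r
    rw [zinf_add]
    exact Finset.inf_congr rfl fun t _ => add_assoc _ _ _
  simp only [this]
  rw [inf_swap]
  exact Finset.inf_congr rfl fun t _ => (zadd_inf _ _).symm

lemma wtIF_eq (iw : Q → ZInf) (Δ : Q → A → Q → ZInf) (fw : Q → ZInf) (x : List A) :
    wtIF iw Δ fw x = Finset.univ.inf fun q => mwtI iw Δ x q + fw q := by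
  unfold wtIF mwtI
  rw [inf_swap]
  exact Finset.inf_congr rfl fun q _ => (zinf_add _ _).symm

lemma wtIF_split (iw : Q → ZInf) (Δ : Q → A → Q → ZInf) (fw : Q → ZInf) (x z : List A) :
    wtIF iw Δ fw (x ++ z) = Finset.univ.inf fun q => mwtI iw Δ x q + mwtF Δ fw z q := by
  rw [wtIF_eq]
  have : ∀ q : Q, mwtI iw Δ (x ++ z) q + fw q
      = Finset.univ.inf fun t => mwtI iw Δ x t + (mwt Δ z t q + fw q) := by
    intro q
    rw [mwtI_append, zinf_add]
    exact Finset.inf_congr rfl fun t _ => add_assoc _ _ _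
  simp only [this]
  rw [inf_swap]
  unfold mwtF
  exact Finset.inf_congr rfl fun t _ => (zadd_inf _ _).symm

lemma wtIF_le (iw : Q → ZInf) (Δ : Q → A → Q → ZInf) (fw : Q → ZInf) (x z : List A) (q : Q) :
    wtIF iw Δ fw (x ++ z) ≤ mwtI iw Δ x q + mwtF Δ fw z q := by
  rw [wtIF_split]; exact Finset.inf_le (Finset.mem_univ q)

lemma wtIF_ge (iw : Q → ZInf) (Δ : Q → A → Q → ZInf) (fw : Q → ZInf) (x z : List A) :
    mwtIall iw Δ x + (Finset.univ.inf fun q => mwtF Δ fw z q) ≤ wtIF iw Δ fw (x ++ z) := by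
  rw [wtIF_split]
  refine Finset.le_inf fun q _ => ?_
  exact add_le_add (Finset.inf_le (Finset.mem_univ q)) (Finset.inf_le (Finset.mem_univ q))

lemma mwtIall_le (iw : Q → ZInf) (Δ : Q → A → Q → ZInf) (x : List A) (q : Q) :
    mwtIall iw Δ x ≤ mwtI iw Δ x q := Finset.inf_le (Finset.mem_univ q)

lemma mwtF_le_step (Δ : Q → A → Q → ZInf) (fw : Q → ZInf) (σ : A) (z : List A) (p t : Q) :
    mwtF Δ fw (σ :: z) p ≤ Δ p σ t + mwtF Δ fw z t := by
  rw [mwtF_cons]; exact Finset.inf_le (Finset.mem_univ t)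

lemma mwtIall_nil (iw : Q → ZInf) (Δ : Q → A → Q → ZInf) :
    mwtIall iw Δ ([] : List A) = Finset.univ.inf iw := by
  unfold mwtIall
  exact Finset.inf_congr rfl fun q _ => mwtI_nil _ _ _

end WFAE
namespace WFAE
open Finset
variable {Q A : Type*} [Fintype Q]
set_option linter.unusedSectionVars false

lemma mwt_sum_embed {β : Type*} [Fintype β] (Δ : Q → A → Q → ZInf)
    (Δ₃ : (Q ⊕ β) → A → (Q ⊕ β) → ZInf)
    (h1 : ∀ p σ q, Δ₃ (.inl p) σ (.inl q) = Δ p σ q)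
    (h2 : ∀ p σ s, Δ₃ (.inl p) σ (.inr s) = ⊤) :
    ∀ (x : List A) (p : Q), (∀ q, mwt Δ₃ x (.inl p) (.inl q) = mwt Δ x p q)
      ∧ (∀ s, mwt Δ₃ x (.inl p) (.inr s) = ⊤) := by
  intro x
  induction x with
  | nil =>
    intro p
    constructor
    · intro q
      rw [mwt_nil, mwt_nil]
      by_cases h : p = q <;> simp [h]
    · intro s
      rw [mwt_nil, if_neg (by simp)]
  | cons σ x ih =>
    intro p
    constructor
    · intro q
      rw [mwt_cons, mwt_cons, inf_sum]
      have hr : (Finset.univ.inf fun b : β => Δ₃ (.inl p) σ (.inr b) + mwt Δ₃ x (.inr b) (.inl q)) = ⊤ := by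
        rw [Finset.inf_eq_top_iff]
        intro b _
        rw [h2]
        simp
      rw [hr, inf_top_eq]
      exact Finset.inf_congr rfl fun t _ => by rw [h1, (ih t).1]
    · intro s
      rw [mwt_cons, Finset.inf_eq_top_iff]
      rintro (t | b) _
      · rw [(ih t).2 s]; simp
      · rw [h2]; simp

lemma mwt_map_inl {Q' B : Type*} [Fintype Q'] (Δ' : Q' → (A ⊕ B) → Q' → ZInf)
    (x : List A) (t m : Q') :
    mwt Δ' (x.map .inl) t m = mwt (fun p σ q => Δ' p (.inl σ) q) x t m := by
  induction x generalizing t with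
  | nil => rfl
  | cons σ x ih =>
    rw [List.map_cons, mwt_cons, mwt_cons]
    exact Finset.inf_congr rfl fun s _ => by rw [ih]

/-- Value of a `start ++ word ++ finish` shaped word in any automaton over `A ⊕ SF`. -/
lemma wtW_word3 {Q' : Type*} [Fintype Q'] (Δ' : Q' → (A ⊕ SF) → Q' → ZInf) (q₀' : Q')
    (x : List A) :
    wtW Δ' q₀' (.inr .start :: (x.map .inl ++ [.inr .finish]))
      = wtIF (fun q => Δ' q₀' (.inr .start) q) (fun p σ q => Δ' p (.inl σ) q)
          (fun q => Finset.univ.inf fun r => Δ' q (.inr .finish) r) x := by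
  rw [wtW_cons, wtIF]
  refine Finset.inf_congr rfl fun t _ => ?_
  have hW : wtW Δ' t (x.map .inl ++ [.inr .finish])
      = Finset.univ.inf fun m => mwt (fun p σ q => Δ' p (.inl σ) q) x t m
          + Finset.univ.inf fun r => Δ' m (.inr .finish) r := by
    unfold wtW
    have : ∀ e, mwt Δ' (x.map .inl ++ [.inr .finish]) t e
        = Finset.univ.inf fun m => mwt Δ' (x.map .inl) t m + Δ' m (.inr .finish) e := by
      intro e; rw [mwt_snoc]
    simp only [this]
    rw [inf_swap]
    refine Finset.inf_congr rfl fun m _ => ?_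
    rw [← zadd_inf]
    congr 1
    exact mwt_map_inl Δ' x t m
  rw [hW, zadd_inf]
  exact Finset.inf_congr rfl fun m _ => (add_assoc _ _ _).symm

variable (iw : Q → ZInf) (Δ : Q → A → Q → ZInf) (fw : Q → ZInf)

lemma lift_finish_row (a : A ⊕ SF) (T : Q ⊕ SF) :
    liftDelta iw Δ fw (.inr .finish) a T = ⊤ := by
  rcases a with σ | s
  · rfl
  · cases s <;> rfl

lemma lift_start_letter (p : Q) (T : Q ⊕ SF) :
    liftDelta iw Δ fw (.inl p) (.inr .start) T = ⊤ := by
  rcases T with q | s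
  · rfl
  · cases s <;> rfl

lemma lift_start_inr (s s' : SF) : liftDelta iw Δ fw (.inr .start) (.inr s) (.inr s') = ⊤ := by
  cases s <;> cases s' <;> rfl

lemma lift_start_inl_letter (σ : A) (T : Q ⊕ SF) :
    liftDelta iw Δ fw (.inr .start) (.inl σ) T = ⊤ := by
  rcases T with q | s
  · rfl
  · cases s <;> rfl

lemma lift_start_fin (T : Q ⊕ SF) :
    liftDelta iw Δ fw (.inr .start) (.inr .finish) T = ⊤ := by
  rcases T with q | s
  · rfl
  · cases s <;> rfl

lemma lift_inl_inl_inr (p : Q) (σ : A) (s : SF) :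
    liftDelta iw Δ fw (.inl p) (.inl σ) (.inr s) = ⊤ := by
  cases s <;> rfl

lemma lift_fin_col (p : Q) (T : Q ⊕ SF) :
    liftDelta iw Δ fw (.inl p) (.inr .finish) T
      = if T = .inr .finish then fw p else ⊤ := by
  rcases T with q | s
  · rfl
  · cases s <;> rfl

/-- The `B` side value of the word `𝗌 x 𝖿`. -/
lemma lift_word3 (x : List A) :
    wtW (liftDelta iw Δ fw) (.inr .start) (.inr .start :: (x.map .inl ++ [.inr .finish]))
      = wtIF iw Δ fw x := by
  rw [wtW_word3]
  have hemb := mwt_sum_embed Δ (fun P σ T => liftDelta iw Δ fw P (.inl σ) T)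
    (fun p σ q => rfl) (fun p σ s => lift_inl_inl_inr iw Δ fw p σ s)
  rw [wtIF_eq, wtIF_eq]
  rw [inf_sum]
  have hr : (Finset.univ.inf fun s : SF =>
      mwtI (fun q => liftDelta iw Δ fw (.inr .start) (.inr .start) q)
        (fun P σ T => liftDelta iw Δ fw P (.inl σ) T) x (.inr s)
      + Finset.univ.inf fun r => liftDelta iw Δ fw (.inr s) (.inr .finish) r) = ⊤ := by
    rw [Finset.inf_eq_top_iff]
    intro s _
    have : (Finset.univ.inf fun r => liftDelta iw Δ fw (.inr s) (.inr .finish) r) = ⊤ := by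
      rw [Finset.inf_eq_top_iff]
      intro r _
      cases s
      · exact lift_start_fin iw Δ fw r
      · exact lift_finish_row iw Δ fw _ r
    rw [this]; simp
  rw [hr, inf_top_eq]
  refine Finset.inf_congr rfl fun q _ => ?_
  congr 1
  · -- mwtI's agree
    unfold mwtI
    rw [inf_sum]
    have hr2 : (Finset.univ.inf fun s : SF =>
        liftDelta iw Δ fw (.inr .start) (.inr .start) (.inr s)
        + mwt (fun P σ T => liftDelta iw Δ fw P (.inl σ) T) x (.inr s) (.inl q)) = ⊤ := by
      rw [Finset.inf_eq_top_iff]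
      intro s _
      rw [lift_start_inr]
      simp
    rw [hr2, inf_top_eq]
    exact Finset.inf_congr rfl fun p _ => by simp only [(hemb x p).1 q]; rfl
  · -- fw's agree
    rw [inf_eq_single _ (Sum.inr SF.finish)]
    · rfl
    · intro T hT
      rw [lift_fin_col, if_neg hT]

lemma lift_s_only (x : List A) :
    wtW (liftDelta iw Δ fw) (.inr .start) [.inr .start]
      = Finset.univ.inf iw := by
  unfold wtW
  have : ∀ T, mwt (liftDelta iw Δ fw) [.inr .start] (.inr .start) T
      = liftDelta iw Δ fw (.inr .start) (.inr .start) T := fun T => mwt_single _ _ _ _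
  simp only [this]
  rw [inf_sum]
  have hr : (Finset.univ.inf fun s : SF =>
      liftDelta iw Δ fw (.inr .start) (.inr .start) (.inr s)) = ⊤ := by
    rw [Finset.inf_eq_top_iff]
    intro s _
    exact lift_start_inr iw Δ fw _ s
  rw [hr, inf_top_eq]
  rfl

end WFAE
namespace WFAE
open Finset
set_option linter.unusedSectionVars false
variable {Q A : Type*} [Fintype Q]

lemma backward (iw : Q → ZInf) (Δ : Q → A → Q → ZInf) (fw : Q → ZInf)
    (htrim : TrimIF iw Δ fw)
    (h : Determinizable (liftDelta iw Δ fw) (Sum.inr SF.start)) :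
    DeterminizableIF iw Δ fw := by
  rcases isEmpty_or_nonempty Q with hQ | hQ
  · -- degenerate: no states, wtIF ≡ ⊤
    refine ⟨PUnit, inferInstance, (fun _ => 0), (fun _ _ _ => ⊤), (fun _ => ⊤), ⟨⟨PUnit.unit, by simp, fun _ _ => rfl⟩, fun p σ q q' hq _ => by simp at hq⟩, fun w => ?_⟩
    rw [wtIF_eq, wtIF_eq]
    rw [(Finset.inf_eq_top_iff _ _).2 (fun q _ => by simp), (Finset.inf_eq_top_iff _ _).2]
    intro q _
    exact (hQ.false q).elim
  obtain ⟨Q', inst, Δ', q₀', hdet, heq⟩ := h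
  refine ⟨Q', inst, (fun q => Δ' q₀' (.inr .start) q), (fun p σ q => Δ' p (.inl σ) q),
    (fun q => Finset.univ.inf fun r => Δ' q (.inr .finish) r), ⟨?_, ?_⟩, fun x => ?_⟩
  · -- exactly one initial
    have hfin : (Finset.univ.inf fun q => Δ' q₀' (.inr .start) q) ≠ ⊤ := by
      have h1 : wtW Δ' q₀' [.inr .start] = Finset.univ.inf iw := by
        rw [heq]
        exact lift_s_only iw Δ fw []
      have h2 : wtW Δ' q₀' [.inr .start] = Finset.univ.inf fun q => Δ' q₀' (.inr .start) q := by
        unfold wtW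
        exact Finset.inf_congr rfl fun e _ => mwt_single _ _ _ _
      obtain ⟨p, wp, hp, _⟩ := (htrim (Classical.arbitrary Q)).1
      rw [h2] at h1
      rw [h1]
      intro hc
      rw [Finset.inf_eq_top_iff] at hc
      exact hp (hc p (Finset.mem_univ p))
    obtain ⟨t, ht⟩ := inf_ne_top hfin
    exact ⟨t, ht, fun t' ht' => hdet q₀' (.inr .start) t' t ht' ht⟩
  · -- IsDet
    intro p σ q q' hq hq'
    exact hdet p (.inl σ) q q' hq hq'
  · -- values agree
    rw [← wtW_word3, heq, lift_word3]
end WFAE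
namespace WFAE
open Finset
set_option linter.unusedSectionVars false

/-- `q` is useful at `x`: it admits a continuation whose combined value is within `L0`
of optimal. -/
def USE {Q A : Type*} [Fintype Q] (iw : Q → ZInf) (Δ : Q → A → Q → ZInf) (fw : Q → ZInf)
    (L0 : ℕ) (x : List A) (q : Q) : Prop :=
  mwtI iw Δ x q ≠ ⊤ ∧ ∃ z, mwtF Δ fw z q ≠ ⊤ ∧
    mwtI iw Δ x q + mwtF Δ fw z q ≤ wtIF iw Δ fw (x ++ z) + (((L0:ℤ)):ZInf)

noncomputable def pval (CC : ℕ) (o : Option (Fin (CC+1))) : ZInf :=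
  o.elim ⊤ fun i => (((i : ℕ) : ℤ) : ZInf)

noncomputable def pcap (CC : ℕ) (m r : ZInf) : Option (Fin (CC+1)) :=
  if h : ∃ e : Fin (CC+1), r = m + (((e : ℕ) : ℤ) : ZInf) then some h.choose else none

lemma pcap_some {CC : ℕ} {m r : ZInf} {e : Fin (CC+1)} (h : pcap CC m r = some e) :
    r = m + (((e : ℕ) : ℤ) : ZInf) := by
  unfold pcap at h
  by_cases hex : ∃ e' : Fin (CC+1), r = m + (((e' : ℕ) : ℤ) : ZInf)
  · rw [dif_pos hex] at h
    obtain rfl : hex.choose = e := Option.some.inj h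
    exact hex.choose_spec
  · rw [dif_neg hex] at h
    cases h

lemma pcap_keep {CC : ℕ} {m r : ZInf} (e : ℕ) (he : e ≤ CC)
    (h : r = m + (((e : ℤ)) : ZInf)) :
    m + pval CC (pcap CC m r) = r := by
  have hex : ∃ e' : Fin (CC+1), r = m + (((e' : ℕ) : ℤ) : ZInf) :=
    ⟨⟨e, Nat.lt_succ_of_le he⟩, by exact_mod_cast h⟩
  unfold pcap
  rw [dif_pos hex]
  unfold pval
  simp only [Option.elim]
  exact hex.choose_spec.symm

lemma pcap_exact {CC : ℕ} {m r : ZInf} (hfin : r ≠ ⊤) (h1 : m ≤ r)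
    (h2 : r ≤ m + ((CC : ℤ) : ZInf)) :
    m + pval CC (pcap CC m r) = r := by
  have hm : m ≠ ⊤ := fun hc => hfin (top_le_iff.1 (hc ▸ h1))
  obtain ⟨ri, hri⟩ := zinf_int hfin
  obtain ⟨mi, hmi⟩ := zinf_int hm
  subst hri hmi
  have h1' : mi ≤ ri := by exact_mod_cast h1
  have h2' : ri ≤ mi + CC := by exact_mod_cast h2
  refine pcap_keep (ri - mi).toNat (by omega) ?_
  have : ((ri - mi).toNat : ℤ) = ri - mi := Int.toNat_of_nonneg (by omega)
  rw [this]
  exact_mod_cast show (ri:ℤ) = mi + (ri - mi) by omega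

section Prof

variable {Q A : Type*} [Fintype Q] [Nonempty Q]
variable (CC : ℕ) (iw : Q → ZInf) (Δ : Q → A → Q → ZInf) (fw : Q → ZInf)

noncomputable def rawv (π : Q → Option (Fin (CC+1))) (σ : A) (q : Q) : ZInf :=
  Finset.univ.inf fun p => pval CC (π p) + Δ p σ q

noncomputable def stepwt (π : Q → Option (Fin (CC+1))) (σ : A) : ZInf :=
  Finset.univ.inf fun q => rawv CC Δ π σ q

noncomputable def nextP (π : Q → Option (Fin (CC+1))) (σ : A) : Q → Option (Fin (CC+1)) :=
  fun q => pcap CC (stepwt CC Δ π σ) (rawv CC Δ π σ q)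

noncomputable def initP : Q → Option (Fin (CC+1)) :=
  fun q => pcap CC (Finset.univ.inf iw) (iw q)

noncomputable def PiP (x : List A) : Q → Option (Fin (CC+1)) :=
  x.foldl (nextP CC Δ) (initP CC iw)

noncomputable def finwt (π : Q → Option (Fin (CC+1))) : ZInf :=
  Finset.univ.inf fun q => pval CC (π q) + fw q

def INVp (L0 : ℕ) (x : List A) : Prop :=
  (∀ q, mwtI iw Δ x q ≤ mwtIall iw Δ x + pval CC (PiP CC iw Δ x q)) ∧
  (∀ q, USE iw Δ fw L0 x q → mwtIall iw Δ x + pval CC (PiP CC iw Δ x q) = mwtI iw Δ x q)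

variable (L0 : ℕ) (yq : Q → List A)
variable (hyq : ∀ q, mwtF Δ fw (yq q) q ≠ ⊤)
variable (hL0 : ∀ q, mwtF Δ fw (yq q) q ≤
    (Finset.univ.inf fun p => mwtF Δ fw (yq q) p) + ((L0 : ℤ) : ZInf))
variable (hkey : ∀ x q, USE iw Δ fw L0 x q →
    mwtI iw Δ x q ≤ mwtIall iw Δ x + ((CC : ℤ) : ZInf))

lemma PiP_nil : PiP CC iw Δ ([] : List A) = initP CC iw := rfl

lemma PiP_snoc (x : List A) (σ : A) :
    PiP CC iw Δ (x ++ [σ]) = nextP CC Δ (PiP CC iw Δ x) σ := by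
  unfold PiP
  rw [List.foldl_append]
  rfl

include hyq hL0 in
lemma use_of_gfin (w : List A) (h : mwtIall iw Δ w ≠ ⊤) :
    ∃ q, mwtI iw Δ w q = mwtIall iw Δ w ∧ USE iw Δ fw L0 w q := by
  obtain ⟨q, hq⟩ := inf_attained (fun q => mwtI iw Δ w q)
  have hq : mwtI iw Δ w q = mwtIall iw Δ w := hq.symm
  refine ⟨q, hq, ?_, yq q, hyq q, ?_⟩
  · rw [hq]; exact h
  · calc mwtI iw Δ w q + mwtF Δ fw (yq q) q
        ≤ mwtI iw Δ w q + ((Finset.univ.inf fun p => mwtF Δ fw (yq q) p) + ((L0:ℤ):ZInf)) :=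
          add_le_add_right (hL0 q) _
      _ = (mwtIall iw Δ w + (Finset.univ.inf fun p => mwtF Δ fw (yq q) p)) + ((L0:ℤ):ZInf) := by
          rw [hq, ← add_assoc]
      _ ≤ wtIF iw Δ fw (w ++ yq q) + ((L0:ℤ):ZInf) :=
          add_le_add_left (wtIF_ge iw Δ fw w (yq q)) _

lemma use_of_ffin (w : List A) (h : wtIF iw Δ fw w ≠ ⊤) :
    ∃ q, mwtI iw Δ w q + fw q = wtIF iw Δ fw w ∧ USE iw Δ fw L0 w q := by
  have hrw := wtIF_eq iw Δ fw w
  obtain ⟨q, hq⟩ := inf_attained (fun q => mwtI iw Δ w q + fw q)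
  rw [← hrw] at hq
  have hq : mwtI iw Δ w q + fw q = wtIF iw Δ fw w := hq.symm
  have hfin : mwtI iw Δ w q + fw q ≠ ⊤ := by rw [hq]; exact h
  obtain ⟨hf1, hf2⟩ := WithTop.add_ne_top.1 hfin
  refine ⟨q, hq, hf1, [], ?_, ?_⟩
  · rw [mwtF_nil]; exact hf2
  · rw [mwtF_nil, List.append_nil, ← hq]
    exact le_add_of_le_of_nonneg le_rfl (by exact_mod_cast Int.natCast_nonneg L0)

include hkey hyq hL0 in
lemma inv_step (x : List A) (σ : A) (hinv : INVp CC iw Δ fw L0 x) :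
    INVp CC iw Δ fw L0 (x ++ [σ]) ∧
      mwtIall iw Δ (x ++ [σ]) = mwtIall iw Δ x + stepwt CC Δ (PiP CC iw Δ x) σ := by
  set π := PiP CC iw Δ x with hπ
  set g := mwtIall iw Δ x with hg
  have hA : ∀ q, mwtI iw Δ (x ++ [σ]) q ≤ g + rawv CC Δ π σ q := by
    intro q
    rw [rawv, zadd_inf, mwtI_snoc]
    refine Finset.le_inf fun p _ => ?_
    refine (Finset.inf_le (Finset.mem_univ p)).trans ?_
    rw [← add_assoc]
    exact add_le_add_left (hinv.1 p) _
  have hB : ∀ q, USE iw Δ fw L0 (x ++ [σ]) q →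
      g + rawv CC Δ π σ q = mwtI iw Δ (x ++ [σ]) q := by
    intro q hq
    obtain ⟨hfin, z, hz, hle⟩ := hq
    obtain ⟨p, hp⟩ := inf_attained (fun p => mwtI iw Δ x p + Δ p σ q)
    rw [← mwtI_snoc] at hp
    have hsum : mwtI iw Δ x p + Δ p σ q ≠ ⊤ := by rw [← hp]; exact hfin
    obtain ⟨hpfin, hΔ⟩ := WithTop.add_ne_top.1 hsum
    have hpuse : USE iw Δ fw L0 x p := by
      refine ⟨hpfin, σ :: z, ?_, ?_⟩
      · exact ne_top_of_le_ne_top (WithTop.add_ne_top.2 ⟨hΔ, hz⟩) (mwtF_le_step Δ fw σ z p q)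
      · calc mwtI iw Δ x p + mwtF Δ fw (σ :: z) p
            ≤ mwtI iw Δ x p + (Δ p σ q + mwtF Δ fw z q) :=
              add_le_add_right (mwtF_le_step Δ fw σ z p q) _
          _ = mwtI iw Δ (x ++ [σ]) q + mwtF Δ fw z q := by rw [hp, add_assoc]
          _ ≤ wtIF iw Δ fw ((x ++ [σ]) ++ z) + ((L0:ℤ):ZInf) := hle
          _ = wtIF iw Δ fw (x ++ (σ :: z)) + ((L0:ℤ):ZInf) := by
              rw [List.append_assoc]; rfl
    have hexact := hinv.2 p hpuse
    refine le_antisymm ?_ (hA q)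
    calc g + rawv CC Δ π σ q
        ≤ g + (pval CC (π p) + Δ p σ q) :=
          add_le_add_right (Finset.inf_le (Finset.mem_univ p)) _
      _ = (g + pval CC (π p)) + Δ p σ q := (add_assoc _ _ _).symm
      _ = mwtI iw Δ x p + Δ p σ q := by rw [hexact]
      _ = mwtI iw Δ (x ++ [σ]) q := hp.symm
  have hstep : mwtIall iw Δ (x ++ [σ]) = g + stepwt CC Δ π σ := by
    apply le_antisymm
    · rw [stepwt, zadd_inf]
      refine Finset.le_inf fun q _ => ?_
      exact (mwtIall_le iw Δ (x ++ [σ]) q).trans (hA q)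
    · by_cases htop : mwtIall iw Δ (x ++ [σ]) = ⊤
      · rw [htop]; exact le_top
      · obtain ⟨q₁, hq₁, huse₁⟩ := use_of_gfin iw Δ fw L0 yq hyq hL0 (x ++ [σ]) htop
        calc g + stepwt CC Δ π σ
            ≤ g + rawv CC Δ π σ q₁ := add_le_add_right (Finset.inf_le (Finset.mem_univ q₁)) _
          _ = mwtI iw Δ (x ++ [σ]) q₁ := hB q₁ huse₁
          _ = mwtIall iw Δ (x ++ [σ]) := hq₁
  refine ⟨⟨?_, ?_⟩, hstep⟩
  · intro q
    rw [PiP_snoc]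
    show mwtI iw Δ (x ++ [σ]) q ≤
      mwtIall iw Δ (x ++ [σ]) + pval CC (pcap CC (stepwt CC Δ π σ) (rawv CC Δ π σ q))
    cases hc : pcap CC (stepwt CC Δ π σ) (rawv CC Δ π σ q) with
    | none =>
      have : pval CC (none : Option (Fin (CC+1))) = ⊤ := rfl
      rw [this]
      simp
    | some e =>
      have he := pcap_some hc
      rw [hstep, add_assoc]
      have : pval CC (some e) = (((e : ℕ) : ℤ) : ZInf) := rfl
      rw [this, ← he]
      exact hA q
  · intro q huse
    rw [PiP_snoc]
    show mwtIall iw Δ (x ++ [σ]) + pval CC (pcap CC (stepwt CC Δ π σ) (rawv CC Δ π σ q))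
      = mwtI iw Δ (x ++ [σ]) q
    have hraweq := hB q huse
    have hrawfin : rawv CC Δ π σ q ≠ ⊤ := by
      intro hc
      rw [hc] at hraweq
      simp at hraweq
      exact huse.1 hraweq.symm
    have hgfin : g ≠ ⊤ := by
      intro hc
      rw [hc] at hraweq
      simp at hraweq
      exact huse.1 hraweq.symm
    have h2 : rawv CC Δ π σ q ≤ stepwt CC Δ π σ + ((CC : ℤ) : ZInf) := by
      have hkq := hkey (x ++ [σ]) q huse
      rw [hstep] at hkq
      rw [← hraweq, add_assoc] at hkq
      exact (WithTop.add_le_add_iff_left hgfin).1 hkq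
    rw [hstep, add_assoc,
      pcap_exact hrawfin
        (show stepwt CC Δ π σ ≤ rawv CC Δ π σ q from Finset.inf_le (Finset.mem_univ q)) h2,
      hraweq]

include hkey in
lemma inv_nil : INVp CC iw Δ fw L0 ([] : List A) := by
  constructor
  · intro q
    rw [PiP_nil, mwtI_nil, mwtIall_nil]
    show iw q ≤ Finset.univ.inf iw + pval CC (pcap CC (Finset.univ.inf iw) (iw q))
    cases hc : pcap CC (Finset.univ.inf iw) (iw q) with
    | none =>
      have : pval CC (none : Option (Fin (CC+1))) = ⊤ := rfl
      rw [this]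
      simp
    | some e =>
      have he := pcap_some hc
      have : pval CC (some e) = (((e : ℕ) : ℤ) : ZInf) := rfl
      rw [this, ← he]
  · intro q huse
    rw [PiP_nil, mwtI_nil, mwtIall_nil]
    show Finset.univ.inf iw + pval CC (pcap CC (Finset.univ.inf iw) (iw q)) = iw q
    have hkq := hkey [] q huse
    rw [mwtI_nil, mwtIall_nil] at hkq
    have hqfin : iw q ≠ ⊤ := by
      have := huse.1
      rw [mwtI_nil] at this
      exact this
    exact pcap_exact hqfin (Finset.inf_le (Finset.mem_univ q)) hkq

include hkey hyq hL0 in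
lemma inv_all (x : List A) : INVp CC iw Δ fw L0 x := by
  induction x using List.reverseRecOn with
  | nil => exact inv_nil CC iw Δ fw L0 hkey
  | append_singleton x σ ih =>
    exact (inv_step CC iw Δ fw L0 yq hyq hL0 hkey x σ ih).1

include hkey hyq hL0 in
lemma g_step (x : List A) (σ : A) :
    mwtIall iw Δ (x ++ [σ]) = mwtIall iw Δ x + stepwt CC Δ (PiP CC iw Δ x) σ :=
  (inv_step CC iw Δ fw L0 yq hyq hL0 hkey x σ
    (inv_all CC iw Δ fw L0 yq hyq hL0 hkey x)).2

include hkey hyq hL0 in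
lemma g_fin (x : List A) :
    wtIF iw Δ fw x = mwtIall iw Δ x + finwt CC fw (PiP CC iw Δ x) := by
  have hinv := inv_all CC iw Δ fw L0 yq hyq hL0 hkey x
  apply le_antisymm
  · rw [finwt, zadd_inf, wtIF_eq]
    refine Finset.le_inf fun q _ => ?_
    refine (Finset.inf_le (Finset.mem_univ q)).trans ?_
    rw [← add_assoc]
    exact add_le_add_left (hinv.1 q) _
  · by_cases htop : wtIF iw Δ fw x = ⊤
    · rw [htop]; exact le_top
    · obtain ⟨q, hq, huse⟩ := use_of_ffin iw Δ fw L0 x htop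
      calc mwtIall iw Δ x + finwt CC fw (PiP CC iw Δ x)
          ≤ mwtIall iw Δ x + (pval CC (PiP CC iw Δ x q) + fw q) :=
            add_le_add_right (Finset.inf_le (Finset.mem_univ q)) _
        _ = (mwtIall iw Δ x + pval CC (PiP CC iw Δ x q)) + fw q := (add_assoc _ _ _).symm
        _ = mwtI iw Δ x q + fw q := by rw [hinv.2 q huse]
        _ = wtIF iw Δ fw x := hq

lemma g_nil_eq : mwtIall iw Δ ([] : List A) = Finset.univ.inf iw := mwtIall_nil iw Δ

end Prof
end WFAE
namespace WFAE
open Finset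
set_option linter.unusedSectionVars false

section Auto

variable {Q A : Type*} [Fintype Q] [Nonempty Q]
variable (CC : ℕ) (iw : Q → ZInf) (Δ : Q → A → Q → ZInf) (fw : Q → ZInf)

noncomputable def DB :
    ((Q → Option (Fin (CC+1))) ⊕ SF) → (A ⊕ SF) → ((Q → Option (Fin (CC+1))) ⊕ SF) → ZInf
  | .inl π, .inl σ, .inl π' => if π' = nextP CC Δ π σ then stepwt CC Δ π σ else ⊤
  | .inl π, .inr .finish, .inr .finish => finwt CC fw π
  | .inr .start, .inr .start, .inl π' => if π' = initP CC iw then Finset.univ.inf iw else ⊤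
  | _, _, _ => ⊤

lemma DB_finish_row (a : A ⊕ SF) (T) : DB CC iw Δ fw (.inr .finish) a T = ⊤ := by
  rcases a with σ | s
  · rcases T with π | t
    · rfl
    · cases t <;> rfl
  · rcases T with π | t
    · cases s <;> rfl
    · cases s <;> cases t <;> rfl

lemma DB_inl_start_row (π) (T) : DB CC iw Δ fw (.inl π) (.inr .start) T = ⊤ := by
  rcases T with π' | t
  · rfl
  · cases t <;> rfl

lemma DB_start_inl_row (σ : A) (T) : DB CC iw Δ fw (.inr .start) (.inl σ) T = ⊤ := by
  rcases T with π' | t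
  · rfl
  · cases t <;> rfl

lemma DB_start_fin_row (T) : DB CC iw Δ fw (.inr .start) (.inr .finish) T = ⊤ := by
  rcases T with π' | t
  · rfl
  · cases t <;> rfl

lemma DB_inl_inl_eq (π) (σ : A) :
    DB CC iw Δ fw (.inl π) (.inl σ) (.inl (nextP CC Δ π σ)) = stepwt CC Δ π σ := by
  show (if nextP CC Δ π σ = nextP CC Δ π σ then stepwt CC Δ π σ else ⊤) = _
  rw [if_pos rfl]

lemma DB_inl_inl_ne (π) (σ : A) (T) (hT : T ≠ .inl (nextP CC Δ π σ)) :
    DB CC iw Δ fw (.inl π) (.inl σ) T = ⊤ := by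
  rcases T with π' | t
  · show (if π' = nextP CC Δ π σ then stepwt CC Δ π σ else ⊤) = _
    rw [if_neg (by simpa using hT)]
  · cases t <;> rfl

lemma DB_inl_fin_eq (π) :
    DB CC iw Δ fw (.inl π) (.inr .finish) (.inr .finish) = finwt CC fw π := rfl

lemma DB_inl_fin_ne (π) (T) (hT : T ≠ .inr .finish) :
    DB CC iw Δ fw (.inl π) (.inr .finish) T = ⊤ := by
  rcases T with π' | t
  · rfl
  · cases t
    · rfl
    · exact absurd rfl hT

lemma DB_start_start_eq :
    DB CC iw Δ fw (.inr .start) (.inr .start) (.inl (initP CC iw)) = Finset.univ.inf iw := by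
  show (if initP CC iw = initP CC iw then Finset.univ.inf iw else ⊤) = _
  rw [if_pos rfl]

lemma DB_start_start_ne (T) (hT : T ≠ .inl (initP CC iw)) :
    DB CC iw Δ fw (.inr .start) (.inr .start) T = ⊤ := by
  rcases T with π' | t
  · show (if π' = initP CC iw then Finset.univ.inf iw else ⊤) = _
    rw [if_neg (by simpa using hT)]
  · cases t <;> rfl

lemma lift_fin_eq (p : Q) :
    liftDelta iw Δ fw (.inl p) (.inr .finish) (.inr .finish) = fw p := rfl

lemma lift_fin_ne (p : Q) (T) (hT : T ≠ .inr .finish) :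
    liftDelta iw Δ fw (.inl p) (.inr .finish) T = ⊤ := by
  rw [lift_fin_col, if_neg hT]

lemma lift_start_start_inl (t : Q) :
    liftDelta iw Δ fw (.inr .start) (.inr .start) (.inl t) = iw t := rfl

lemma DB_det : IsDet (DB CC iw Δ fw) := by
  rintro (π | s) (σ | t) T T' h h'
  · by_cases h1 : T = .inl (nextP CC Δ π σ)
    · by_cases h2 : T' = .inl (nextP CC Δ π σ)
      · rw [h1, h2]
      · exact absurd (DB_inl_inl_ne CC iw Δ fw π σ T' h2) h'
    · exact absurd (DB_inl_inl_ne CC iw Δ fw π σ T h1) h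
  · cases t
    · exact absurd (DB_inl_start_row CC iw Δ fw π T) h
    · by_cases h1 : T = .inr .finish
      · by_cases h2 : T' = .inr .finish
        · rw [h1, h2]
        · exact absurd (DB_inl_fin_ne CC iw Δ fw π T' h2) h'
      · exact absurd (DB_inl_fin_ne CC iw Δ fw π T h1) h
  · cases s
    · exact absurd (DB_start_inl_row CC iw Δ fw σ T) h
    · exact absurd (DB_finish_row CC iw Δ fw _ T) h
  · cases s
    · cases t
      · by_cases h1 : T = .inl (initP CC iw)
        · by_cases h2 : T' = .inl (initP CC iw)
          · rw [h1, h2]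
          · exact absurd (DB_start_start_ne CC iw Δ fw T' h2) h'
        · exact absurd (DB_start_start_ne CC iw Δ fw T h1) h
      · exact absurd (DB_start_fin_row CC iw Δ fw T) h
    · exact absurd (DB_finish_row CC iw Δ fw _ T) h

lemma wtW_top_of_row {Q' : Type*} [Fintype Q'] {B : Type*}
    (Δ' : Q' → B → Q' → ZInf) (p : Q') (a : B) (w : List B)
    (h : ∀ T, Δ' p a T = ⊤) : wtW Δ' p (a :: w) = ⊤ := by
  rw [wtW_cons]
  rw [Finset.inf_eq_top_iff]
  intro T _
  rw [h T]
  exact top_add _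

lemma wtW_single_col {Q' : Type*} [Fintype Q'] {B : Type*}
    (Δ' : Q' → B → Q' → ZInf) (p T0 : Q') (a : B) (w : List B) (v : ZInf)
    (h0 : Δ' p a T0 = v) (h : ∀ T, T ≠ T0 → Δ' p a T = ⊤) :
    wtW Δ' p (a :: w) = v + wtW Δ' T0 w := by
  rw [wtW_cons]
  rw [inf_eq_single _ T0]
  · rw [h0]
  · intro T hT
    rw [h T hT]
    exact top_add _

variable (L0 : ℕ) (yq : Q → List A)
variable (hyq : ∀ q, mwtF Δ fw (yq q) q ≠ ⊤)
variable (hL0 : ∀ q, mwtF Δ fw (yq q) q ≤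
    (Finset.univ.inf fun p => mwtF Δ fw (yq q) p) + ((L0 : ℤ) : ZInf))
variable (hkey : ∀ x q, USE iw Δ fw L0 x q →
    mwtI iw Δ x q ≤ mwtIall iw Δ x + ((CC : ℤ) : ZInf))

include hyq hL0 hkey in
lemma main_sim : ∀ (w : List (A ⊕ SF)) (x : List A),
    mwtIall iw Δ x + wtW (DB CC iw Δ fw) (.inl (PiP CC iw Δ x)) w
      = Finset.univ.inf fun t => mwtI iw Δ x t + wtW (liftDelta iw Δ fw) (.inl t) w := by
  intro w
  induction w with
  | nil =>
    intro x
    simp only [wtW_nil, add_zero]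
    rfl
  | cons a w ih =>
    intro x
    rcases a with σ | s
    · -- an original letter
      have hL : wtW (DB CC iw Δ fw) (.inl (PiP CC iw Δ x)) (.inl σ :: w)
          = stepwt CC Δ (PiP CC iw Δ x) σ
            + wtW (DB CC iw Δ fw) (.inl (nextP CC Δ (PiP CC iw Δ x) σ)) w :=
        wtW_single_col _ _ _ _ _ _ (DB_inl_inl_eq CC iw Δ fw _ σ)
          (fun T hT => DB_inl_inl_ne CC iw Δ fw _ σ T hT)
      have hR : ∀ t : Q, wtW (liftDelta iw Δ fw) (.inl t) (.inl σ :: w)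
          = Finset.univ.inf fun s => Δ t σ s + wtW (liftDelta iw Δ fw) (.inl s) w := by
        intro t
        rw [wtW_cons, inf_sum]
        have h2 : (Finset.univ.inf fun b : SF =>
            liftDelta iw Δ fw (.inl t) (.inl σ) (.inr b)
              + wtW (liftDelta iw Δ fw) (.inr b) w) = ⊤ := by
          rw [Finset.inf_eq_top_iff]
          intro b _
          rw [lift_inl_inl_inr]
          exact top_add _
        rw [h2, inf_top_eq]
        rfl
      have hRHS : (Finset.univ.inf fun t =>
            mwtI iw Δ x t + wtW (liftDelta iw Δ fw) (.inl t) (.inl σ :: w))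
          = Finset.univ.inf fun s =>
              mwtI iw Δ (x ++ [σ]) s + wtW (liftDelta iw Δ fw) (.inl s) w := by
        calc (Finset.univ.inf fun t =>
              mwtI iw Δ x t + wtW (liftDelta iw Δ fw) (.inl t) (.inl σ :: w))
            = Finset.univ.inf fun t => Finset.univ.inf fun s =>
                (mwtI iw Δ x t + Δ t σ s) + wtW (liftDelta iw Δ fw) (.inl s) w := by
              refine Finset.inf_congr rfl fun t _ => ?_
              rw [hR t, zadd_inf]
              exact Finset.inf_congr rfl fun s _ => (add_assoc _ _ _).symm
          _ = _ := by
              rw [inf_swap]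
              refine Finset.inf_congr rfl fun s _ => ?_
              rw [← zinf_add, ← mwtI_snoc]
      rw [hRHS, hL, ← add_assoc, ← g_step CC iw Δ fw L0 yq hyq hL0 hkey x σ, ← PiP_snoc]
      exact ih (x ++ [σ])
    · cases s
      · -- fresh start letter: both sides ⊤
        have hL : wtW (DB CC iw Δ fw) (.inl (PiP CC iw Δ x)) (.inr .start :: w) = ⊤ :=
          wtW_top_of_row _ _ _ _ (fun T => DB_inl_start_row CC iw Δ fw _ T)
        rw [hL, add_top]
        symm
        rw [Finset.inf_eq_top_iff]
        intro t _
        rw [wtW_top_of_row _ _ _ _ (fun T => lift_start_letter iw Δ fw t T), add_top]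
      · -- fresh finish letter
        have hdead := wtW_dead (DB CC iw Δ fw) (.inr .finish)
          (fun a T => DB_finish_row CC iw Δ fw a T) w
        have hdead' := wtW_dead (liftDelta iw Δ fw) (.inr .finish)
          (fun a T => lift_finish_row iw Δ fw a T) w
        have hL : wtW (DB CC iw Δ fw) (.inl (PiP CC iw Δ x)) (.inr .finish :: w)
            = finwt CC fw (PiP CC iw Δ x) + wtW (DB CC iw Δ fw) (.inr .finish) w :=
          wtW_single_col _ _ _ _ _ _ (DB_inl_fin_eq CC iw Δ fw _)
            (fun T hT => DB_inl_fin_ne CC iw Δ fw _ T hT)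
        have hR : ∀ t : Q, wtW (liftDelta iw Δ fw) (.inl t) (.inr .finish :: w)
            = fw t + wtW (liftDelta iw Δ fw) (.inr .finish) w :=
          fun t => wtW_single_col _ _ _ _ _ _ (lift_fin_eq iw Δ fw t)
            (fun T hT => lift_fin_ne iw Δ fw t T hT)
        have hRHS : (Finset.univ.inf fun t =>
              mwtI iw Δ x t + wtW (liftDelta iw Δ fw) (.inl t) (.inr .finish :: w))
            = wtIF iw Δ fw x + wtW (liftDelta iw Δ fw) (.inr .finish) w := by
          calc (Finset.univ.inf fun t =>
                mwtI iw Δ x t + wtW (liftDelta iw Δ fw) (.inl t) (.inr .finish :: w))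
              = Finset.univ.inf fun t =>
                  (mwtI iw Δ x t + fw t) + wtW (liftDelta iw Δ fw) (.inr .finish) w := by
                refine Finset.inf_congr rfl fun t _ => ?_
                rw [hR t, ← add_assoc]
            _ = _ := by
                rw [← zinf_add, ← wtIF_eq]
        rw [hRHS, hL, ← add_assoc, ← g_fin CC iw Δ fw L0 yq hyq hL0 hkey x, hdead, hdead']

include hyq hL0 hkey in
lemma DB_top_eq : ∀ w : List (A ⊕ SF),
    wtW (DB CC iw Δ fw) (.inr .start) w = wtW (liftDelta iw Δ fw) (.inr .start) w := by
  intro w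
  cases w with
  | nil => rw [wtW_nil, wtW_nil]
  | cons a w =>
    rcases a with σ | s
    · rw [wtW_top_of_row _ _ _ _ (fun T => DB_start_inl_row CC iw Δ fw σ T),
        wtW_top_of_row _ _ _ _ (fun T => lift_start_inl_letter iw Δ fw σ T)]
    · cases s
      · -- start
        rw [wtW_single_col _ _ _ _ _ _ (DB_start_start_eq CC iw Δ fw)
          (fun T hT => DB_start_start_ne CC iw Δ fw T hT)]
        have h1 : (Finset.univ.inf iw) + wtW (DB CC iw Δ fw) (.inl (initP CC iw)) w
            = mwtIall iw Δ [] + wtW (DB CC iw Δ fw) (.inl (PiP CC iw Δ [])) w := by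
          rw [mwtIall_nil, PiP_nil]
        rw [h1, main_sim CC iw Δ fw L0 yq hyq hL0 hkey w []]
        rw [wtW_cons, inf_sum]
        have h2 : (Finset.univ.inf fun b : SF =>
            liftDelta iw Δ fw (.inr .start) (.inr .start) (.inr b)
              + wtW (liftDelta iw Δ fw) (.inr b) w) = ⊤ := by
          rw [Finset.inf_eq_top_iff]
          intro b _
          rw [lift_start_inr]
          exact top_add _
        rw [h2, inf_top_eq]
        refine Finset.inf_congr rfl fun t _ => ?_
        rw [mwtI_nil]
        rfl
      · rw [wtW_top_of_row _ _ _ _ (fun T => DB_start_fin_row CC iw Δ fw T),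
          wtW_top_of_row _ _ _ _ (fun T => lift_start_fin iw Δ fw T)]

lemma mwt_reindex {Q1 : Type*} [Fintype Q1] {B : Type*} (N : ℕ) (e : Q1 ≃ Fin N)
    (Δ1 : Q1 → B → Q1 → ZInf) (w : List B) (p q : Q1) :
    mwt (fun a σ b => Δ1 (e.symm a) σ (e.symm b)) w (e p) (e q) = mwt Δ1 w p q := by
  induction w generalizing p with
  | nil =>
    rw [mwt_nil, mwt_nil]
    by_cases h : p = q
    · rw [if_pos h, if_pos (by rw [h])]
    · rw [if_neg h, if_neg (by simp [h])]
  | cons σ w ih =>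
    rw [mwt_cons, mwt_cons, inf_equiv e]
    refine Finset.inf_congr rfl fun t _ => ?_
    simp only [Equiv.symm_apply_apply]
    rw [ih t]

include hyq hL0 hkey in
lemma build_det : Determinizable (liftDelta iw Δ fw) (Sum.inr SF.start) := by
  classical
  refine ⟨Fin (Fintype.card (((Q → Option (Fin (CC+1))) ⊕ SF))), inferInstance,
    (fun a σ b => DB CC iw Δ fw ((Fintype.equivFin _).symm a) σ ((Fintype.equivFin _).symm b)),
    (Fintype.equivFin _) (.inr .start), ?_, ?_⟩
  · intro p σ q q' h h'
    have := DB_det CC iw Δ fw ((Fintype.equivFin _).symm p) σ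
      ((Fintype.equivFin _).symm q) ((Fintype.equivFin _).symm q') h h'
    exact (Fintype.equivFin _).symm.injective this
  · intro w
    have hwtW : wtW (fun a σ b => DB CC iw Δ fw ((Fintype.equivFin _).symm a) σ
          ((Fintype.equivFin _).symm b)) ((Fintype.equivFin _) (.inr .start)) w
        = wtW (DB CC iw Δ fw) (.inr .start) w := by
      unfold wtW
      rw [inf_equiv (Fintype.equivFin _)]
      exact Finset.inf_congr rfl fun t _ => mwt_reindex _ (Fintype.equivFin _) _ w _ t
    rw [hwtW]
    exact DB_top_eq CC iw Δ fw L0 yq hyq hL0 hkey w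

end Auto
end WFAE
namespace WFAE
open Finset
set_option linter.unusedSectionVars false

lemma untop_eq {a : ZInf} (h : a ≠ ⊤) : a = ((a.untopD 0 : ℤ) : ZInf) := by
  obtain ⟨m, rfl⟩ := zinf_int h
  rw [WithTop.untopD_coe]

section DetL
variable {Q A : Type*} [Fintype Q]

lemma wtIF_le_one (iw : Q → ZInf) (Δ : Q → A → Q → ZInf) (fw : Q → ZInf)
    (w : List A) (p e : Q) :
    wtIF iw Δ fw w ≤ iw p + mwt Δ w p e + fw e := by
  refine (Finset.inf_le (Finset.mem_univ p)).trans ?_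
  exact Finset.inf_le (Finset.mem_univ e)

variable {Q' : Type*} [Fintype Q'] (Δ' : Q' → A → Q' → ZInf)

lemma det_mwt_unique (hdet : IsDet Δ') :
    ∀ (x : List A) (p t t' : Q'), mwt Δ' x p t ≠ ⊤ → mwt Δ' x p t' ≠ ⊤ → t = t' := by
  intro x
  induction x with
  | nil =>
    intro p t t' h h'
    rw [mwt_nil] at h h'
    by_cases h1 : p = t
    · by_cases h2 : p = t'
      · rw [← h1, h2]
      · rw [if_neg h2] at h'; exact absurd rfl h'
    · rw [if_neg h1] at h; exact absurd rfl h
  | cons σ x ih =>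
    intro p t t' h h'
    rw [mwt_cons] at h h'
    obtain ⟨s, hs⟩ := inf_ne_top h
    obtain ⟨s', hs'⟩ := inf_ne_top h'
    obtain ⟨hΔ, hm⟩ := WithTop.add_ne_top.1 hs
    obtain ⟨hΔ', hm'⟩ := WithTop.add_ne_top.1 hs'
    obtain rfl := hdet p σ s s' hΔ hΔ'
    exact ih s t t' hm hm'

lemma det_split (hdet : IsDet Δ') (u v : List A) (p e t : Q')
    (hu : mwt Δ' u p t ≠ ⊤) :
    mwt Δ' (u ++ v) p e = mwt Δ' u p t + mwt Δ' v t e := by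
  rw [mwt_append]
  rw [inf_eq_single _ t]
  intro s hs
  by_cases h1 : mwt Δ' u p s = ⊤
  · rw [h1]; exact top_add _
  · exact absurd (det_mwt_unique Δ' hdet u p s t h1 hu) hs

end DetL

lemma pigeon {T : Type*} [Fintype T] [Nonempty T] (n K L' : ℕ) (c : ℕ → ℤ) (t : ℕ → T)
    (hstep : ∀ i < n, c (i+1) ≤ c i + K)
    (hbig : c 0 + (Fintype.card T) * (L' + 1 + K) < c n) :
    ∃ i j, i < j ∧ j ≤ n ∧ t i = t j ∧ (L' : ℤ) + 1 ≤ c j - c i := by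
  classical
  set NT := Fintype.card T with hNT
  set Ls : ℤ := (L' : ℤ) + 1 + K with hLs
  have hLs1 : (K : ℤ) + 1 ≤ Ls := by simp only [hLs]; omega
  have hK0 : (0 : ℤ) ≤ (K : ℤ) := by positivity
  have hex : ∀ ℓ : Fin (NT + 1), ∃ i, i ≤ n ∧ c 0 + ((ℓ : ℕ) : ℤ) * Ls ≤ c i := by
    intro ℓ
    refine ⟨n, le_rfl, ?_⟩
    have h1 : ((ℓ : ℕ) : ℤ) * Ls ≤ (NT : ℤ) * Ls := by
      have h3 : ((ℓ : ℕ) : ℤ) ≤ (NT : ℤ) := by exact_mod_cast Nat.lt_succ_iff.1 ℓ.isLt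
      exact mul_le_mul_of_nonneg_right h3 (by linarith)
    have h2 : c 0 + (NT : ℤ) * Ls ≤ c n := le_of_lt (by exact_mod_cast hbig)
    linarith
  set I : Fin (NT + 1) → ℕ := fun ℓ => Nat.find (hex ℓ) with hI
  have hIle : ∀ ℓ, I ℓ ≤ n := fun ℓ => (Nat.find_spec (hex ℓ)).1
  have hIlow : ∀ ℓ : Fin (NT + 1), c 0 + ((ℓ : ℕ) : ℤ) * Ls ≤ c (I ℓ) :=
    fun ℓ => (Nat.find_spec (hex ℓ)).2
  have hIhigh : ∀ ℓ : Fin (NT + 1), c (I ℓ) ≤ c 0 + ((ℓ : ℕ) : ℤ) * Ls + K := by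
    intro ℓ
    have hnn : (0 : ℤ) ≤ ((ℓ : ℕ) : ℤ) * Ls := by positivity
    cases hIv : I ℓ with
    | zero => linarith
    | succ m =>
      have hmlt : m < I ℓ := by omega
      have hmin := Nat.find_min (hex ℓ) hmlt
      push_neg at hmin
      have hmn : m ≤ n := by have := hIle ℓ; omega
      have h1 : c m < c 0 + ((ℓ : ℕ) : ℤ) * Ls := hmin hmn
      have hmltn : m < n := by have := hIle ℓ; omega
      have h2 := hstep m hmltn
      linarith
  have hcard : Fintype.card T < Fintype.card (Fin (NT + 1)) := by simp [hNT]
  obtain ⟨ℓ₁, ℓ₂, hne, hteq⟩ :=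
    Fintype.exists_ne_map_eq_of_card_lt (fun ℓ : Fin (NT + 1) => t (I ℓ)) hcard
  obtain ⟨ℓa, ℓb, hab, hteq2⟩ : ∃ ℓa ℓb : Fin (NT + 1), ℓa < ℓb ∧ t (I ℓa) = t (I ℓb) := by
    rcases lt_or_gt_of_ne hne with hlt | hlt
    · exact ⟨ℓ₁, ℓ₂, hlt, hteq⟩
    · exact ⟨ℓ₂, ℓ₁, hlt, hteq.symm⟩
  have hmul : ((ℓa : ℕ) : ℤ) * Ls + Ls ≤ ((ℓb : ℕ) : ℤ) * Ls := by
    have h3 : ((ℓa : ℕ) : ℤ) + 1 ≤ ((ℓb : ℕ) : ℤ) := by exact_mod_cast hab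
    nlinarith
  have h1 := hIhigh ℓa
  have h2 := hIlow ℓb
  refine ⟨I ℓa, I ℓb, ?_, hIle ℓb, hteq2, by linarith⟩
  have hle : I ℓa ≤ I ℓb := by
    apply Nat.find_min'
    refine ⟨hIle ℓb, ?_⟩
    have h3 : ((ℓa : ℕ) : ℤ) * Ls ≤ ((ℓb : ℕ) : ℤ) * Ls := by linarith
    linarith
  rcases lt_or_eq_of_le hle with h | h
  · exact h
  · exfalso
    rw [h] at h1
    linarith

end WFAE
namespace WFAE
open Finset
set_option linter.unusedSectionVars false
set_option maxHeartbeats 1000000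

section Key
variable {Q A : Type*} [Fintype Q] [Fintype A] [Nonempty Q]
variable {Q' : Type*} [Fintype Q']
variable (iw : Q → ZInf) (Δ : Q → A → Q → ZInf) (fw : Q → ZInf)
variable (iw' : Q' → ZInf) (Δ' : Q' → A → Q' → ZInf) (fw' : Q' → ZInf) (q0' : Q')

lemma key_exists
    (hdet : IsDet Δ') (hq0 : iw' q0' ≠ ⊤) (huq : ∀ p, iw' p ≠ ⊤ → p = q0')
    (heq : ∀ w, wtIF iw' Δ' fw' w = wtIF iw Δ fw w)
    (yq : Q → List A) (hyq : ∀ q, mwtF Δ fw (yq q) q ≠ ⊤) (L0 : ℕ) :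
    ∃ CC : ℕ, ∀ x q, USE iw Δ fw L0 x q →
      mwtI iw Δ x q ≤ mwtIall iw Δ x + ((CC : ℤ) : ZInf) := by
  classical
  haveI : Nonempty Q' := ⟨q0'⟩
  have shuffle1 : ∀ a b c e : ZInf, (a + b) + (c + e) = (a + (b + c)) + e := by
    intro a b c e
    rw [← add_assoc, add_assoc a b c]
  -- constants
  set KA := Finset.univ.sup (fun t : Q × A × Q => ((Δ t.1 t.2.1 t.2.2).untopD 0).natAbs) with hKA
  have PA : ∀ p σ q, Δ p σ q ≠ ⊤ → Δ p σ q ≤ ((KA : ℤ) : ZInf) := by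
    intro p σ q h
    obtain ⟨m, hm⟩ := zinf_int h
    have h1 : m.natAbs ≤ KA := by
      have h2 := Finset.le_sup
        (f := fun t : Q × A × Q => ((Δ t.1 t.2.1 t.2.2).untopD 0).natAbs)
        (Finset.mem_univ (p, (σ, q)))
      simpa [hm] using h2
    rw [hm]
    have h5 : (m.natAbs : ℤ) ≤ (KA : ℤ) := by exact_mod_cast h1
    exact_mod_cast show m ≤ (KA : ℤ) by omega
  set KD := Finset.univ.sup (fun t : Q' × A × Q' => ((Δ' t.1 t.2.1 t.2.2).untopD 0).natAbs) with hKD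
  have PD : ∀ p σ q, Δ' p σ q ≠ ⊤ → ((-(KD : ℤ) : ℤ) : ZInf) ≤ Δ' p σ q := by
    intro p σ q h
    obtain ⟨m, hm⟩ := zinf_int h
    have h1 : m.natAbs ≤ KD := by
      have h2 := Finset.le_sup
        (f := fun t : Q' × A × Q' => ((Δ' t.1 t.2.1 t.2.2).untopD 0).natAbs)
        (Finset.mem_univ (p, (σ, q)))
      simpa [hm] using h2
    rw [hm]
    have h5 : (m.natAbs : ℤ) ≤ (KD : ℤ) := by exact_mod_cast h1
    exact_mod_cast show -(KD : ℤ) ≤ m by omega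
  set KI := Finset.univ.sup (fun p : Q => ((iw p).untopD 0).natAbs) with hKI
  have PIu : ∀ p, iw p ≠ ⊤ → iw p ≤ ((KI : ℤ) : ZInf) := by
    intro p h
    obtain ⟨m, hm⟩ := zinf_int h
    have h1 : m.natAbs ≤ KI := by
      have h2 := Finset.le_sup (f := fun p : Q => ((iw p).untopD 0).natAbs) (Finset.mem_univ p)
      simpa [hm] using h2
    rw [hm]
    have h5 : (m.natAbs : ℤ) ≤ (KI : ℤ) := by exact_mod_cast h1
    exact_mod_cast show m ≤ (KI : ℤ) by omega
  have PIl : ∀ p, iw p ≠ ⊤ → ((-(KI : ℤ) : ℤ) : ZInf) ≤ iw p := by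
    intro p h
    obtain ⟨m, hm⟩ := zinf_int h
    have h1 : m.natAbs ≤ KI := by
      have h2 := Finset.le_sup (f := fun p : Q => ((iw p).untopD 0).natAbs) (Finset.mem_univ p)
      simpa [hm] using h2
    rw [hm]
    have h5 : (m.natAbs : ℤ) ≤ (KI : ℤ) := by exact_mod_cast h1
    exact_mod_cast show -(KI : ℤ) ≤ m by omega
  set KI' := ((iw' q0').untopD 0).natAbs with hKI'
  have PI' : ((-(KI' : ℤ) : ℤ) : ZInf) ≤ iw' q0' := by
    obtain ⟨m, hm⟩ := zinf_int hq0
    rw [hm]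
    have h5 : (m.natAbs : ℤ) = (KI' : ℤ) := by rw [hKI', hm]; simp
    exact_mod_cast show -(KI' : ℤ) ≤ m by omega
  set Cmax := Finset.univ.sup (fun q : Q => ((mwtF Δ fw (yq q) q).untopD 0).natAbs) with hCmax
  have PC : ∀ q, mwtF Δ fw (yq q) q ≤ ((Cmax : ℤ) : ZInf) := by
    intro q
    obtain ⟨m, hm⟩ := zinf_int (hyq q)
    have h1 : m.natAbs ≤ Cmax := by
      have h2 := Finset.le_sup (f := fun q : Q => ((mwtF Δ fw (yq q) q).untopD 0).natAbs)
        (Finset.mem_univ q)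
      simpa [hm] using h2
    rw [hm]
    have h5 : (m.natAbs : ℤ) ≤ (Cmax : ℤ) := by exact_mod_cast h1
    exact_mod_cast show m ≤ (Cmax : ℤ) by omega
  set beta : Q' → Q → ZInf := fun s q => Finset.univ.inf fun e => mwt Δ' (yq q) s e + fw' e
    with hbeta
  set Bmax := Finset.univ.sup (fun t : Q' × Q => ((beta t.1 t.2).untopD 0).natAbs) with hBmax
  have PB : ∀ s q, beta s q ≠ ⊤ → ((-(Bmax : ℤ) : ℤ) : ZInf) ≤ beta s q := by
    intro s q h
    obtain ⟨m, hm⟩ := zinf_int h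
    have h1 : m.natAbs ≤ Bmax := by
      have h2 := Finset.le_sup (f := fun t : Q' × Q => ((beta t.1 t.2).untopD 0).natAbs)
        (Finset.mem_univ (s, q))
      simpa [hm] using h2
    rw [hm]
    have h5 : (m.natAbs : ℤ) ≤ (Bmax : ℤ) := by exact_mod_cast h1
    exact_mod_cast show -(Bmax : ℤ) ≤ m by omega
  set M1 := Cmax + Bmax with hM1
  -- the key deterministic upper bound on accumulated D weights
  have W_le : ∀ (x : List A) (t : Q'), mwtIall iw Δ x ≠ ⊤ → mwt Δ' x q0' t ≠ ⊤ →
      iw' q0' + mwt Δ' x q0' t ≤ mwtIall iw Δ x + ((M1 : ℤ) : ZInf) := by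
    intro x t hg hx
    obtain ⟨qh, hqh⟩ := inf_attained (fun q => mwtI iw Δ x q)
    have hgq : mwtIall iw Δ x = mwtI iw Δ x qh := hqh
    have hup : wtIF iw Δ fw (x ++ yq qh) ≤ mwtIall iw Δ x + ((Cmax : ℤ) : ZInf) := by
      refine (wtIF_le iw Δ fw x (yq qh) qh).trans ?_
      rw [hgq]
      exact add_le_add_right (PC qh) _
    have hfin : wtIF iw Δ fw (x ++ yq qh) ≠ ⊤ := by
      refine ne_top_of_le_ne_top ?_ hup
      exact WithTop.add_ne_top.2 ⟨hg, by exact WithTop.coe_ne_top⟩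
    have hlow : (iw' q0' + mwt Δ' x q0' t) + beta t qh ≤ wtIF iw' Δ' fw' (x ++ yq qh) := by
      rw [wtIF]
      refine Finset.le_inf fun p _ => Finset.le_inf fun e _ => ?_
      by_cases hp : iw' p = ⊤
      · rw [hp]; simp
      · rw [huq p hp]
        rw [det_split Δ' hdet x (yq qh) q0' e t hx]
        have hb : beta t qh ≤ mwt Δ' (yq qh) t e + fw' e := Finset.inf_le (Finset.mem_univ e)
        calc (iw' q0' + mwt Δ' x q0' t) + beta t qh
            ≤ (iw' q0' + mwt Δ' x q0' t) + (mwt Δ' (yq qh) t e + fw' e) :=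
              add_le_add_right hb _
          _ = iw' q0' + (mwt Δ' x q0' t + mwt Δ' (yq qh) t e) + fw' e := shuffle1 _ _ _ _
    rw [heq] at hlow
    have hWfin : iw' q0' + mwt Δ' x q0' t ≠ ⊤ := WithTop.add_ne_top.2 ⟨hq0, hx⟩
    have hbfin : beta t qh ≠ ⊤ := by
      intro hc
      rw [hc, add_top] at hlow
      exact hfin (top_le_iff.1 hlow)
    obtain ⟨wv, hwv⟩ := zinf_int hWfin
    obtain ⟨bv, hbv⟩ := zinf_int hbfin
    obtain ⟨gv, hgv⟩ := zinf_int hg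
    have hb2 : -(Bmax : ℤ) ≤ bv := by
      have := PB t qh hbfin
      rw [hbv] at this
      exact_mod_cast this
    have hcomb : wv + bv ≤ gv + Cmax := by
      have h6 := hlow.trans hup
      rw [hwv, hbv, hgv] at h6
      exact_mod_cast h6
    rw [hwv, hgv]
    exact_mod_cast show wv ≤ gv + (M1 : ℤ) by
      have : (M1 : ℤ) = (Cmax : ℤ) + (Bmax : ℤ) := by exact_mod_cast congrArg (Nat.cast : ℕ → ℤ) hM1
      omega
  set NT := Fintype.card (Q × Q') with hNT
  set P := 2*KI + KI' + M1 + NT * (L0 + 1 + (KA + KD)) + 2 with hP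
  refine ⟨P, ?_⟩
  intro x q huse
  by_contra hcon
  obtain ⟨hqfin, z, hkz, hle⟩ := huse
  have hgfin : mwtIall iw Δ x ≠ ⊤ := ne_top_of_le_ne_top hqfin (mwtIall_le iw Δ x q)
  obtain ⟨hq_i, hhq⟩ := zinf_int hqfin
  obtain ⟨g_i, hg⟩ := zinf_int hgfin
  obtain ⟨kz_i, hkzv⟩ := zinf_int hkz
  have hE : g_i + (P : ℕ) < hq_i := by
    by_contra hE'
    push_neg at hE'
    refine hcon ?_
    rw [hhq, hg]
    exact_mod_cast hE'
  -- the degenerate case x = []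
  by_cases hxe : x = []
  · subst hxe
    rw [mwtI_nil] at hhq hqfin
    rw [mwtIall_nil] at hg
    obtain ⟨p1, hp1⟩ := inf_attained iw
    have hp1fin : iw p1 ≠ ⊤ := by rw [← hp1, hg]; exact WithTop.coe_ne_top
    have h1 : hq_i ≤ (KI : ℤ) := by
      have := PIu q hqfin
      rw [hhq] at this
      exact_mod_cast this
    have h2 : -(KI : ℤ) ≤ g_i := by
      have := PIl p1 hp1fin
      rw [← hp1, hg] at this
      exact_mod_cast this
    have hPge : 2*KI ≤ P := by
      have h9 : 0 ≤ NT * (L0 + 1 + (KA + KD)) := Nat.zero_le _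
      omega
    have h6 : ((2*KI : ℕ) : ℤ) ≤ (P : ℤ) := by exact_mod_cast hPge
    push_cast at h6
    omega
  -- f is finite, D accepts x ++ z
  have hffin : wtIF iw Δ fw (x ++ z) ≠ ⊤ :=
    ne_top_of_le_ne_top (WithTop.add_ne_top.2 ⟨hqfin, hkz⟩) (wtIF_le iw Δ fw x z q)
  have hffin' : wtIF iw' Δ' fw' (x ++ z) ≠ ⊤ := by rw [heq]; exact hffin
  obtain ⟨efin, hefin⟩ : ∃ e, mwt Δ' (x ++ z) q0' e ≠ ⊤ := by
    rw [wtIF] at hffin'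
    obtain ⟨p, hp⟩ := inf_ne_top hffin'
    obtain ⟨e, he⟩ := inf_ne_top hp
    obtain ⟨h1, h2⟩ := WithTop.add_ne_top.1 he
    obtain ⟨h3, h4⟩ := WithTop.add_ne_top.1 h1
    obtain rfl := huq p h3
    exact ⟨e, h4⟩
  have hpref : ∀ i : ℕ, ∃ t, mwt Δ' (x.take i) q0' t ≠ ⊤ := by
    intro i
    obtain ⟨t, ht⟩ := mwt_split Δ' (x.take i) (x.drop i ++ z) q0' efin
    have hdecomp : x.take i ++ (x.drop i ++ z) = x ++ z := by
      rw [← List.append_assoc, List.take_append_drop]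
    rw [hdecomp] at ht
    have h5 := hefin
    rw [ht] at h5
    exact ⟨t, (WithTop.add_ne_top.1 h5).1⟩
  choose d hd using hpref
  set n := x.length with hn
  set Wf : ℕ → ZInf := fun i => iw' q0' + mwt Δ' (x.take i) q0' (d i) with hWf
  have hWfin : ∀ i, Wf i ≠ ⊤ := fun i => WithTop.add_ne_top.2 ⟨hq0, hd i⟩
  set Wv : ℕ → ℤ := fun i => (Wf i).untopD 0 with hWv
  have hWeq : ∀ i, Wf i = ((Wv i : ℤ) : ZInf) := fun i => untop_eq (hWfin i)
  -- A-side chain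
  set σf : ℕ → A := fun i => x.getD i (x.head hxe) with hσf
  have htake : ∀ i < n, x.take (i+1) = x.take i ++ [σf i] := by
    intro i hi
    have hi' : i < x.length := hi
    rw [List.take_succ]
    congr 1
    rw [List.getElem?_eq_getElem hi']
    simp only [Option.toList_some, hσf]
    rw [List.getD_eq_getElem x _ hi']
  have hdrop : ∀ i < n, x.drop i = σf i :: x.drop (i+1) := by
    intro i hi
    have hi' : i < x.length := hi
    rw [List.drop_eq_getElem_cons hi']
    congr 1
    simp only [hσf]
    rw [List.getD_eq_getElem x _ hi']
  have hnext : ∀ (t : Q) (i : ℕ), ∃ s, i < n →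
      mwt Δ (x.drop i) t q = Δ t (σf i) s + mwt Δ (x.drop (i+1)) s q := by
    intro t i
    by_cases hi : i < n
    · obtain ⟨s, hs⟩ := inf_attained (fun s => Δ t (σf i) s + mwt Δ (x.drop (i+1)) s q)
      refine ⟨s, fun _ => ?_⟩
      rw [hdrop i hi, mwt_cons]
      exact hs
    · exact ⟨Classical.arbitrary Q, fun h => absurd h hi⟩
  choose FA hFA using hnext
  obtain ⟨p0, hp0⟩ := inf_attained (fun p => iw p + mwt Δ x p q)
  have hp0' : mwtI iw Δ x q = iw p0 + mwt Δ x p0 q := hp0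
  set ρ : ℕ → Q := fun i => Nat.rec p0 (fun j r => FA r j) i with hρ
  have hρs : ∀ i, ρ (i+1) = FA (ρ i) i := fun i => rfl
  set Av : ℕ → ZInf :=
    fun i => Nat.rec (iw p0) (fun j a => a + Δ (ρ j) (σf j) (ρ (j+1))) i with hAvd
  have hAv0 : Av 0 = iw p0 := rfl
  have hAvs : ∀ i, Av (i+1) = Av i + Δ (ρ i) (σf i) (ρ (i+1)) := fun i => rfl
  have hchain : ∀ i, i ≤ n → Av i + mwt Δ (x.drop i) (ρ i) q = mwtI iw Δ x q
      ∧ mwtI iw Δ (x.take i) (ρ i) ≤ Av i := by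
    intro i
    induction i with
    | zero =>
      intro _
      constructor
      · rw [hAv0, List.drop_zero]
        exact hp0'.symm
      · rw [hAv0, List.take_zero, mwtI_nil]
        exact le_rfl
    | succ i ih =>
      intro hi1
      have hi : i < n := by omega
      obtain ⟨ha, hb⟩ := ih (by omega)
      have hstep := hFA (ρ i) i hi
      rw [← hρs i] at hstep
      constructor
      · rw [hAvs i, add_assoc, ← hstep, ha]
      · calc mwtI iw Δ (x.take (i+1)) (ρ (i+1))
            ≤ mwtI iw Δ (x.take i) (ρ i) + Δ (ρ i) (σf i) (ρ (i+1)) := by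
              rw [htake i hi, mwtI_snoc]
              exact Finset.inf_le (Finset.mem_univ (ρ i))
          _ ≤ Av i + Δ (ρ i) (σf i) (ρ (i+1)) := add_le_add_left hb _
          _ = Av (i+1) := (hAvs i).symm
  have hAfin : ∀ i, i ≤ n → Av i ≠ ⊤ ∧ mwt Δ (x.drop i) (ρ i) q ≠ ⊤ := by
    intro i hi
    have h1 := (hchain i hi).1
    constructor
    · intro hc; rw [hc, top_add] at h1; exact hqfin h1.symm
    · intro hc; rw [hc, add_top] at h1; exact hqfin h1.symm
  have hAn : Av n = mwtI iw Δ x q := by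
    have h1 := (hchain n le_rfl).1
    have h2 := (hAfin n le_rfl).2
    have h3 : x.drop n = [] := by rw [hn]; exact List.drop_length
    rw [h3, mwt_nil] at h1 h2
    by_cases hρq : ρ n = q
    · rw [if_pos hρq, add_zero] at h1
      exact h1
    · rw [if_neg hρq] at h2
      exact absurd rfl h2
  set Aiv : ℕ → ℤ := fun i => (Av i).untopD 0 with hAiv
  have hAveq : ∀ i, i ≤ n → Av i = ((Aiv i : ℤ) : ZInf) := fun i hi => untop_eq (hAfin i hi).1
  set cseq : ℕ → ℤ := fun i => Aiv i - Wv i with hcseq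
  have hstepc : ∀ i < n, cseq (i+1) ≤ cseq i + (KA + KD : ℕ) := by
    intro i hi
    have hΔfin : Δ (ρ i) (σf i) (ρ (i+1)) ≠ ⊤ := by
      have h1 := (hAfin (i+1) (by omega)).1
      rw [hAvs i] at h1
      exact (WithTop.add_ne_top.1 h1).2
    obtain ⟨da, hda⟩ := zinf_int hΔfin
    have hA1 : Aiv (i+1) = Aiv i + da := by
      have h1 := hAvs i
      rw [hAveq (i+1) (by omega), hAveq i (by omega), hda] at h1
      exact_mod_cast h1
    have hda2 : da ≤ (KA : ℤ) := by
      have h1 := PA _ _ _ hΔfin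
      rw [hda] at h1
      exact_mod_cast h1
    have hWstep : mwt Δ' (x.take (i+1)) q0' (d (i+1))
        = mwt Δ' (x.take i) q0' (d i) + Δ' (d i) (σf i) (d (i+1)) := by
      rw [htake i hi, det_split Δ' hdet _ _ _ _ _ (hd i), mwt_single]
    have hΔ'fin : Δ' (d i) (σf i) (d (i+1)) ≠ ⊤ := by
      have h1 := hd (i+1)
      rw [hWstep] at h1
      exact (WithTop.add_ne_top.1 h1).2
    obtain ⟨dd, hdd⟩ := zinf_int hΔ'fin
    have hW1 : Wv (i+1) = Wv i + dd := by
      have h1 : Wf (i+1) = Wf i + Δ' (d i) (σf i) (d (i+1)) := by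
        simp only [hWf]
        rw [hWstep, add_assoc]
      rw [hWeq (i+1), hWeq i, hdd] at h1
      exact_mod_cast h1
    have hdd2 : -(KD : ℤ) ≤ dd := by
      have h1 := PD _ _ _ hΔ'fin
      rw [hdd] at h1
      exact_mod_cast h1
    simp only [hcseq]
    push_cast
    omega
  have htn : x.take n = x := by rw [hn]; exact List.take_length
  have hWn_le : Wv n ≤ g_i + M1 := by
    have h1 := W_le x (d n) hgfin (by rw [← htn]; exact hd n)
    have h2 : Wf n ≤ mwtIall iw Δ x + ((M1 : ℤ) : ZInf) := by
      simp only [hWf]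
      rw [htn]
      exact h1
    rw [hWeq n, hg] at h2
    have h3 : ((Wv n : ℤ) : ZInf) ≤ ((g_i + M1 : ℤ) : ZInf) := by
      refine h2.trans ?_
      rw [show ((g_i + (M1:ℤ) : ℤ) : ZInf) = ((g_i : ℤ) : ZInf) + (((M1:ℕ) : ℤ) : ZInf) by push_cast; rfl]
    exact_mod_cast h3
  have hc0 : cseq 0 ≤ KI + KI' := by
    have h1 : Av 0 ≠ ⊤ := (hAfin 0 (by omega)).1
    rw [hAv0] at h1
    have h3 : Aiv 0 ≤ (KI : ℤ) := by
      have h2 := PIu p0 h1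
      have h4 := hAveq 0 (by omega)
      rw [hAv0] at h4
      rw [h4] at h2
      exact_mod_cast h2
    have h5 : -(KI' : ℤ) ≤ Wv 0 := by
      have h6 := hd 0
      have h7 : x.take 0 = [] := List.take_zero
      rw [h7, mwt_nil] at h6
      by_cases hqd : q0' = d 0
      · have h8 : Wf 0 = iw' q0' := by
          simp only [hWf]
          rw [h7, mwt_nil, if_pos hqd, add_zero]
        have h9 := PI'
        rw [← h8, hWeq 0] at h9
        exact_mod_cast h9
      · rw [if_neg hqd] at h6
        exact absurd rfl h6
    simp only [hcseq]
    push_cast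
    omega
  have hAn_i : Aiv n = hq_i := by
    have h1 := hAveq n le_rfl
    rw [hAn, hhq] at h1
    exact_mod_cast h1.symm
  haveI : Nonempty (Q × Q') := inferInstance
  obtain ⟨i, j, hij, hjn, hteq, hgap⟩ := pigeon n (KA + KD) L0 cseq (fun i => (ρ i, d i))
    hstepc (by
      have h1 : cseq n = hq_i - Wv n := by simp only [hcseq]; rw [hAn_i]
      have hprod : (Fintype.card (Q × Q') : ℤ) * ((L0:ℤ) + 1 + ((KA + KD : ℕ) : ℤ))
          = ((NT * (L0 + 1 + (KA + KD)) : ℕ) : ℤ) := by rw [hNT]; push_cast; ring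
      have hPz : (P:ℤ) = 2*(KI:ℤ) + (KI':ℤ) + (M1:ℤ)
          + ((NT * (L0 + 1 + (KA + KD)) : ℕ) : ℤ) + 2 := by
        rw [hP]; push_cast; ring
      rw [hprod]
      omega)
  have hρij : ρ i = ρ j := congrArg Prod.fst hteq
  have hdij : d i = d j := congrArg Prod.snd hteq
  -- pump the loop out
  set seg := (x.take j).drop i with hseg
  have hxij : x.take j = x.take i ++ seg := by
    rw [hseg]
    conv_lhs => rw [← List.take_append_drop i (x.take j)]
    rw [List.take_take, min_eq_left (le_of_lt hij)]
  set wd := mwt Δ' seg (d i) (d j) with hwd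
  have hWd : mwt Δ' (x.take j) q0' (d j) = mwt Δ' (x.take i) q0' (d i) + wd := by
    rw [hxij]
    exact det_split Δ' hdet _ _ _ _ _ (hd i)
  have hwdfin : wd ≠ ⊤ := by
    have h1 := hd j
    rw [hWd] at h1
    exact (WithTop.add_ne_top.1 h1).2
  obtain ⟨wdv, hwdv⟩ := zinf_int hwdfin
  have hwdint : Wv j = Wv i + wdv := by
    have h1 : Wf j = Wf i + wd := by
      simp only [hWf]
      rw [hWd, add_assoc]
    rw [hWeq j, hWeq i, hwdv] at h1
    exact_mod_cast h1
  set ω := (x.take i ++ x.drop j) ++ z with hω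
  have hβ : wtIF iw' Δ' fw' (x ++ z) ≤ wtIF iw' Δ' fw' ω + wd := by
    have hrw : wtIF iw' Δ' fw' ω + wd = Finset.univ.inf fun p =>
        Finset.univ.inf fun e => (iw' p + mwt Δ' ω p e + fw' e) + wd := by
      rw [wtIF, zinf_add]
      exact Finset.inf_congr rfl fun p _ => zinf_add _ _
    rw [hrw]
    refine Finset.le_inf fun p _ => Finset.le_inf fun e _ => ?_
    by_cases hp : iw' p = ⊤
    · rw [hp]
      simp
    · rw [huq p hp]
      have hsplit : mwt Δ' ω q0' e
          = mwt Δ' (x.take i) q0' (d i) + mwt Δ' (x.drop j ++ z) (d i) e := by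
        have h1 : ω = x.take i ++ (x.drop j ++ z) := by rw [hω, List.append_assoc]
        rw [h1]
        exact det_split Δ' hdet _ _ _ _ _ (hd i)
      have htri : mwt Δ' (x ++ z) q0' e
          ≤ mwt Δ' (x.take i) q0' (d i) + (wd + mwt Δ' (x.drop j ++ z) (d j) e) := by
        have hdecomp : x ++ z = x.take i ++ (seg ++ (x.drop j ++ z)) := by
          conv_lhs => rw [← List.take_append_drop j x]
          rw [hxij]
          simp [List.append_assoc]
        rw [hdecomp]
        refine (mwt_triangle Δ' _ _ _ (d i) _).trans ?_
        refine add_le_add_right ?_ _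
        refine le_trans (mwt_triangle Δ' seg (x.drop j ++ z) (d i) (d j) e) ?_
        exact le_rfl
      calc wtIF iw' Δ' fw' (x ++ z)
          ≤ iw' q0' + mwt Δ' (x ++ z) q0' e + fw' e := wtIF_le_one iw' Δ' fw' _ q0' e
        _ ≤ iw' q0' + (mwt Δ' (x.take i) q0' (d i)
              + (wd + mwt Δ' (x.drop j ++ z) (d j) e)) + fw' e := by
            refine add_le_add_left (add_le_add_right htri _) _
        _ = (iw' q0' + (mwt Δ' (x.take i) q0' (d i)
              + mwt Δ' (x.drop j ++ z) (d j) e) + fw' e) + wd := by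
            abel
        _ = (iw' q0' + mwt Δ' ω q0' e + fw' e) + wd := by
            rw [hsplit, hdij]
  have hβ' : wtIF iw Δ fw (x ++ z) ≤ wtIF iw Δ fw ω + wd := by
    rw [← heq, ← heq]
    exact hβ
  have hα : wtIF iw Δ fw ω ≤ (Av i + mwt Δ (x.drop j) (ρ j) q) + mwtF Δ fw z q := by
    refine le_trans (wtIF_le iw Δ fw _ z q) ?_
    refine add_le_add_left ?_ _
    have h1 : mwtI iw Δ (x.take i ++ x.drop j) q
        ≤ mwtI iw Δ (x.take i) (ρ i) + mwt Δ (x.drop j) (ρ i) q := by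
      rw [mwtI_append]
      exact Finset.inf_le (Finset.mem_univ (ρ i))
    rw [← hρij]
    refine h1.trans ?_
    exact add_le_add_left (hchain i (by omega)).2 _
  -- combine everything into an integer contradiction
  obtain ⟨sv, hsv⟩ := zinf_int (hAfin j hjn).2
  have hsum1 : Aiv j + sv = hq_i := by
    have h1 := (hchain j hjn).1
    rw [hAveq j hjn, hsv, hhq] at h1
    exact_mod_cast h1
  have hfr : mwtI iw Δ x q + mwtF Δ fw z q
      ≤ (((Av i + mwt Δ (x.drop j) (ρ j) q) + mwtF Δ fw z q) + wd) + ((L0 : ℤ) : ZInf) := by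
    refine hle.trans ?_
    refine add_le_add_left ?_ _
    refine hβ'.trans ?_
    exact add_le_add_left hα _
  have hfr_i : hq_i + kz_i ≤ (((Aiv i + sv) + kz_i) + wdv) + (L0 : ℤ) := by
    rw [hhq, hkzv, hAveq i (by omega), hsv, hwdv] at hfr
    exact_mod_cast hfr
  have hgap2 : (L0 : ℤ) + 1 ≤ (Aiv j - Wv j) - (Aiv i - Wv i) := by
    simpa [hcseq] using hgap
  omega

end Key
end WFAE
/-- **Removing initial and final weights**: a trim WFA_if `A` is determinizable (as a
WFA_if) iff the WFA `B` (with initial state `s₀`, no initial/final weights, and all states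
accepting) is determinizable (as a WFA). -/
theorem wfaif_determinizable_iff_lift_determinizable {Q A : Type*} [Fintype Q] [Fintype A]
    (iw : Q → ZInf) (Δ : Q → A → Q → ZInf) (fw : Q → ZInf)
    (htrim : TrimIF iw Δ fw) :
    DeterminizableIF iw Δ fw ↔ Determinizable (liftDelta iw Δ fw) (Sum.inr SF.start) := by
  constructor
  · intro h
    rcases isEmpty_or_nonempty Q with hQ | hQ
    · -- degenerate case: no states
      refine ⟨PUnit, inferInstance, (fun _ _ _ => ⊤), PUnit.unit,
        fun p σ q q' hq _ => absurd rfl hq, fun w => ?_⟩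
      cases w with
      | nil => rw [WFAE.wtW_nil, WFAE.wtW_nil]
      | cons a w =>
        rw [WFAE.wtW_top_of_row _ _ _ _ (fun T => rfl),
          WFAE.wtW_top_of_row _ _ _ _ (fun T => ?_)]
        rcases T with q | s
        · exact (hQ.false q).elim
        · rcases a with σ | t
          · exact WFAE.lift_start_inl_letter iw Δ fw σ _
          · cases t
            · exact WFAE.lift_start_inr iw Δ fw _ s
            · exact WFAE.lift_start_fin iw Δ fw _
    · obtain ⟨Q'0, inst0, iw', Δ', fw', ⟨⟨q0', hq0, huq⟩, hdet'⟩, heqf⟩ := h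
      -- exit words from trimness
      have hyqex : ∀ q : Q, ∃ y, mwtF Δ fw y q ≠ ⊤ := by
        intro q
        obtain ⟨r, w, hr, hw⟩ := (htrim q).2
        refine ⟨w, ?_⟩
        refine ne_top_of_le_ne_top (WithTop.add_ne_top.2 ⟨hw, hr⟩) ?_
        exact Finset.inf_le (Finset.mem_univ r)
      choose yq hyq using hyqex
      -- the slack constant
      obtain ⟨L0, hL0⟩ : ∃ L0 : ℕ, ∀ q, mwtF Δ fw (yq q) q ≤
          (Finset.univ.inf fun p => mwtF Δ fw (yq q) p) + ((L0 : ℤ) : ZInf) := by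
        refine ⟨Finset.univ.sup (fun q : Q => ((mwtF Δ fw (yq q) q).untopD 0
          - (Finset.univ.inf fun p => mwtF Δ fw (yq q) p).untopD 0).toNat), fun q => ?_⟩
        have hdle : (Finset.univ.inf fun p => mwtF Δ fw (yq q) p) ≤ mwtF Δ fw (yq q) q :=
          Finset.inf_le (Finset.mem_univ q)
        have hdfin : (Finset.univ.inf fun p => mwtF Δ fw (yq q) p) ≠ ⊤ :=
          ne_top_of_le_ne_top (hyq q) hdle
        obtain ⟨ci, hci⟩ := WFAE.zinf_int (hyq q)
        obtain ⟨di, hdi⟩ := WFAE.zinf_int hdfin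
        have h1 : di ≤ ci := by
          rw [hci, hdi] at hdle
          exact_mod_cast hdle
        have h3 : ((mwtF Δ fw (yq q) q).untopD 0
            - (Finset.univ.inf fun p => mwtF Δ fw (yq q) p).untopD 0).toNat
            ≤ Finset.univ.sup (fun q : Q => ((mwtF Δ fw (yq q) q).untopD 0
              - (Finset.univ.inf fun p => mwtF Δ fw (yq q) p).untopD 0).toNat) :=
          Finset.le_sup (f := fun q : Q => ((mwtF Δ fw (yq q) q).untopD 0
            - (Finset.univ.inf fun p => mwtF Δ fw (yq q) p).untopD 0).toNat)
            (Finset.mem_univ q)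
        rw [hci, hdi] at h3 ⊢
        simp only [WithTop.untopD_coe] at h3
        generalize hS : (Finset.univ.sup (fun q : Q => ((mwtF Δ fw (yq q) q).untopD 0
          - (Finset.univ.inf fun p => mwtF Δ fw (yq q) p).untopD 0).toNat)) = S at h3 ⊢
        have h5 : ((ci - di).toNat : ℤ) ≤ (S : ℤ) := by exact_mod_cast h3
        exact_mod_cast show ci ≤ di + (S : ℤ) by omega
      haveI : Nonempty Q := hQ
      obtain ⟨CC, hkey⟩ := WFAE.key_exists iw Δ fw iw' Δ' fw' q0' hdet' hq0 huq heqf yq hyq L0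
      exact WFAE.build_det CC iw Δ fw L0 yq hyq hL0 hkey
  · exact WFAE.backward iw Δ fw htrim
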